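/- arXiv:1708.07713 — 7 statements merged into one kernel-verified Lean document; each statement's English description precedes it below -/
import Mathlib

section
/- Let α ∈ ℝ, let G ⊆ H be an isometry-invariant open set with 0 ∉ G, and let ρ : G × H → ℝ satisfy ρ_g(r·h) = |r|^α·ρ_g(h) for every g ∈ G, h ∈ H and every nonzero r ∈ 𝔽. Then ρ is isometry-invariant if and only if there exists a function λ : (0,∞) × ℝ × ℝ → ℝ, written λ_r(p,q), such that: (1) λ_r(t·p, t·q) = t^α·λ_r(p,q) for all r > 0, p,q ∈ ℝ, t > 0; (2) λ_r(−p, q) = λ_r(p, −q) = λ_r(p, q) for all r > 0, p,q ∈ ℝ; and (3) ρ_g(h) = λ_{‖g‖}(|⟨h,g⟩|, √(‖h‖²·‖g‖² − |⟨h,g⟩|²)) for every g ∈ G and h ∈ H. -/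
/-!
Two pairs `(g, h)` and `(g', h')` with `‖g‖ = ‖g'‖`, `‖h‖ = ‖h'‖` and `⟪g, h⟫ = ⟪g', h'⟫` have
equal Gram matrices, so `g ↦ g'`, `h ↦ h'` is an isometry between their spans; inside the finite
dimensional span of all four vectors it extends to an isometry, and it extends further to `H` by
the identity on the orthogonal complement. Multiplying `h` by a unimodular scalar, which does not
change `ρ_g(h)`, only `|⟪g, h⟫|` has to match. Hence an isometry-invariant `ρ` is a function of
`(‖g‖, |⟪g, h⟫|, ‖h‖)`, and `λ_r(p, q)` is that function at `(r, |p|, √(p² + q²) / r)`.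
-/

/-- `G` is an isometry-invariant open set in `H`: `G = {x : ‖x‖ ∈ R}` for some open
subset `R` of `[0,∞)`. -/
def IsInvariantOpen {H : Type*} [NormedAddCommGroup H] (G : Set H) : Prop :=
  ∃ R : Set ℝ, IsOpen {r : Set.Ici (0 : ℝ) | (r : ℝ) ∈ R} ∧ G = {x : H | ‖x‖ ∈ R}

section

open Submodule

variable {𝕜 H : Type*} [RCLike 𝕜] [NormedAddCommGroup H] [InnerProductSpace 𝕜 H]

theorem LinearIsometry.exists_extension_of_submodule (W : Submodule 𝕜 H)
    [W.HasOrthogonalProjection] (T₀ : W →ₗᵢ[𝕜] W) :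
    ∃ T : H →ₗᵢ[𝕜] H, ∀ x : W, T x = T₀ x := by
  let P := W.orthogonalProjectionOnto.toLinearMap
  let Q := Wᗮ.orthogonalProjectionOnto.toLinearMap
  let M : H →ₗ[𝕜] H := W.subtype ∘ₗ T₀.toLinearMap ∘ₗ P + Wᗮ.subtype ∘ₗ Q
  have hM : ∀ x, ‖M x‖ = ‖x‖ := fun x => by
    have horth : inner 𝕜 (T₀ (P x) : H) (Q x : H) = 0 :=
      W.inner_right_of_mem_orthogonal (T₀ (P x)).2 (Q x).2
    refine (sq_eq_sq₀ (norm_nonneg _) (norm_nonneg _)).mp ?_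
    calc ‖M x‖ ^ 2 = ‖(T₀ (P x) : H)‖ ^ 2 + ‖(Q x : H)‖ ^ 2 := by
          simp only [sq]
          exact norm_add_sq_eq_norm_sq_add_norm_sq_of_inner_eq_zero _ _ horth
      _ = ‖x‖ ^ 2 := by
          rw [norm_coe, norm_coe, T₀.norm_map, norm_sq_eq_add_norm_sq_projection x W]; rfl
  refine ⟨⟨M, hM⟩, fun x => ?_⟩
  simp [M, P, Q]

theorem exists_linearIsometry_comp_eq_of_inner_eq_of_finiteDimensional
    {V : Type*} [NormedAddCommGroup V] [InnerProductSpace 𝕜 V] [FiniteDimensional 𝕜 V]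
    {ι : Type*} [Fintype ι] {v w : ι → V}
    (hvw : ∀ i j, inner 𝕜 (v i) (v j) = inner 𝕜 (w i) (w j)) :
    ∃ T : V →ₗᵢ[𝕜] V, T ∘ v = w := by
  classical
  let φ := Fintype.linearCombination 𝕜 v
  let ψ := Fintype.linearCombination 𝕜 w
  have hnorm : ∀ c, ‖ψ c‖ = ‖φ c‖ := fun c => by
    have : inner 𝕜 (ψ c) (ψ c) = inner 𝕜 (φ c) (φ c) := by
      simp only [φ, ψ, Fintype.linearCombination_apply, sum_inner, inner_sum, inner_smul_left,
        inner_smul_right, hvw]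
    rw [norm_eq_sqrt_re_inner (𝕜 := 𝕜), norm_eq_sqrt_re_inner (𝕜 := 𝕜), this]
  have hker : LinearMap.ker φ ≤ LinearMap.ker ψ := fun c hc => by
    simpa [← norm_eq_zero, hnorm] using hc
  let L : LinearMap.range φ →ₗ[𝕜] V :=
    (LinearMap.ker φ).liftQ ψ hker ∘ₗ φ.quotKerEquivRange.symm.toLinearMap
  have hL : ∀ c, L ⟨φ c, LinearMap.mem_range_self φ c⟩ = ψ c := fun c => by simp [L]
  have hLn : ∀ s, ‖L s‖ = ‖s‖ := by
    rintro ⟨_, c, rfl⟩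
    rw [hL, hnorm]; rfl
  refine ⟨LinearIsometry.extend ⟨L, hLn⟩, funext fun i => ?_⟩
  have := (LinearIsometry.extend_apply ⟨L, hLn⟩
    ⟨φ (Pi.single i 1), LinearMap.mem_range_self φ _⟩).trans (hL (Pi.single i 1))
  simpa [φ, ψ] using this

theorem exists_linearIsometry_comp_eq_of_inner_eq {ι : Type*} [Fintype ι] {v w : ι → H}
    (hvw : ∀ i j, inner 𝕜 (v i) (v j) = inner 𝕜 (w i) (w j)) :
    ∃ T : H →ₗᵢ[𝕜] H, T ∘ v = w := by
  let W := span 𝕜 (Set.range v ∪ Set.range w)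
  have : FiniteDimensional 𝕜 W :=
    FiniteDimensional.span_of_finite 𝕜 ((Set.finite_range v).union (Set.finite_range w))
  let v' : ι → W := fun i => ⟨v i, subset_span (Or.inl ⟨i, rfl⟩)⟩
  let w' : ι → W := fun i => ⟨w i, subset_span (Or.inr ⟨i, rfl⟩)⟩
  obtain ⟨T₀, hT₀⟩ := exists_linearIsometry_comp_eq_of_inner_eq_of_finiteDimensional
    (v := v') (w := w') hvw
  obtain ⟨T, hT⟩ := LinearIsometry.exists_extension_of_submodule W T₀
  exact ⟨T, funext fun i => (hT (v' i)).trans (congrArg Subtype.val (congrFun hT₀ i))⟩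

theorem exists_linearIsometry_apply_eq_of_inner_eq {g h g' h' : H} (hg : ‖g'‖ = ‖g‖)
    (hh : ‖h'‖ = ‖h‖) (hgh : inner 𝕜 g h = inner 𝕜 g' h') :
    ∃ T : H →ₗᵢ[𝕜] H, T g = g' ∧ T h = h' := by
  have hgram : ∀ i j, inner 𝕜 (![g, h] i) (![g, h] j) = inner 𝕜 (![g', h'] i) (![g', h'] j) := by
    simp only [Fin.forall_fin_two, Matrix.cons_val_zero, Matrix.cons_val_one,
      inner_self_eq_norm_sq_to_K, hg, hh, hgh, ← inner_conj_symm h, ← inner_conj_symm h']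
    simp
  obtain ⟨T, hT⟩ := exists_linearIsometry_comp_eq_of_inner_eq hgram
  exact ⟨T, congrFun hT 0, congrFun hT 1⟩

theorem RCLike.exists_norm_eq_one_mul_eq {z z' : 𝕜} (h : ‖z‖ = ‖z'‖) :
    ∃ c : 𝕜, ‖c‖ = 1 ∧ c * z = z' := by
  rcases eq_or_ne z 0 with rfl | hz
  · exact ⟨1, norm_one, by simpa [eq_comm] using h⟩
  · exact ⟨z' / z, by rw [norm_div, h, div_self (h ▸ norm_ne_zero_iff.mpr hz)],
      div_mul_cancel₀ z' hz⟩

section Profile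

variable (𝕜)

def pairInvariants (g h : H) : ℝ × ℝ × ℝ := (‖g‖, ‖inner 𝕜 g h‖, ‖h‖)

noncomputable def invariantProfile (G : Set H) (ρ : H → H → ℝ) : ℝ × ℝ × ℝ → ℝ :=
  Function.extend (fun x : G × H => pairInvariants 𝕜 (x.1 : H) x.2) (fun x => ρ x.1 x.2) 0

variable {𝕜}

theorem pairInvariants_ofReal_smul (g h : H) {t : ℝ} (ht : 0 ≤ t) :
    pairInvariants 𝕜 g ((t : 𝕜) • h) = (‖g‖, t * ‖inner 𝕜 g h‖, t * ‖h‖) := by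
  simp [pairInvariants, inner_smul_right, norm_smul, abs_of_nonneg ht]

variable {α : ℝ} {G : Set H} {ρ : H → H → ℝ}

theorem eq_of_pairInvariants_eq
    (hρ : ∀ g ∈ G, ∀ h : H, ∀ r : 𝕜, r ≠ 0 → ρ g (r • h) = ‖r‖ ^ α * ρ g h)
    (hinv : ∀ T : H →ₗᵢ[𝕜] H, ∀ g ∈ G, ∀ h : H, ρ (T g) (T h) = ρ g h)
    {g g' h h' : H} (hg : g ∈ G) (heq : pairInvariants 𝕜 g h = pairInvariants 𝕜 g' h') :
    ρ g h = ρ g' h' := by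
  simp only [pairInvariants, Prod.mk.injEq] at heq
  obtain ⟨hgn, hin, hhn⟩ := heq
  obtain ⟨c, hc, hch⟩ := RCLike.exists_norm_eq_one_mul_eq hin
  have hc0 : c ≠ 0 := norm_ne_zero_iff.mp (hc ▸ one_ne_zero)
  obtain ⟨T, hTg, hTh⟩ := exists_linearIsometry_apply_eq_of_inner_eq (g := g) (h := c • h)
    (g' := g') (h' := h') hgn.symm (by rw [norm_smul, hc, one_mul, hhn])
    (by rw [inner_smul_right, hch])
  rw [← hTg, ← hTh, hinv T g hg, hρ g hg h c hc0, hc, Real.one_rpow, one_mul]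

theorem invariantProfile_pairInvariants
    (hρ : ∀ g ∈ G, ∀ h : H, ∀ r : 𝕜, r ≠ 0 → ρ g (r • h) = ‖r‖ ^ α * ρ g h)
    (hinv : ∀ T : H →ₗᵢ[𝕜] H, ∀ g ∈ G, ∀ h : H, ρ (T g) (T h) = ρ g h)
    {g : H} (hg : g ∈ G) (h : H) :
    invariantProfile 𝕜 G ρ (pairInvariants 𝕜 g h) = ρ g h :=
  Function.FactorsThrough.extend_apply (f := fun x : G × H => pairInvariants 𝕜 (x.1 : H) x.2)
    (g := fun x => ρ x.1 x.2) (fun x _ hx => eq_of_pairInvariants_eq hρ hinv x.1.2 hx)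
    0 (⟨g, hg⟩, h)

theorem invariantProfile_smul
    (hρ : ∀ g ∈ G, ∀ h : H, ∀ r : 𝕜, r ≠ 0 → ρ g (r • h) = ‖r‖ ^ α * ρ g h)
    (hinv : ∀ T : H →ₗᵢ[𝕜] H, ∀ g ∈ G, ∀ h : H, ρ (T g) (T h) = ρ g h)
    (r a b : ℝ) {t : ℝ} (ht : 0 < t) :
    invariantProfile 𝕜 G ρ (r, t * a, t * b) = t ^ α * invariantProfile 𝕜 G ρ (r, a, b) := by
  have hscale : ∀ {s a b : ℝ}, 0 < s →
      (∃ x : G × H, pairInvariants 𝕜 (x.1 : H) x.2 = (r, a, b)) →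
      ∃ x : G × H, pairInvariants 𝕜 (x.1 : H) x.2 = (r, s * a, s * b) := by
    rintro s a b hs ⟨⟨g, h⟩, hgh⟩
    simp only [pairInvariants, Prod.mk.injEq] at hgh
    obtain ⟨rfl, rfl, rfl⟩ := hgh
    exact ⟨(g, (s : 𝕜) • h), pairInvariants_ofReal_smul _ h hs.le⟩
  by_cases hmem : ∃ x : G × H, pairInvariants 𝕜 (x.1 : H) x.2 = (r, a, b)
  · obtain ⟨⟨⟨g, hg⟩, h⟩, hgh⟩ := hmem
    simp only [pairInvariants, Prod.mk.injEq] at hgh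
    obtain ⟨rfl, rfl, rfl⟩ := hgh
    change _ = t ^ α * invariantProfile 𝕜 G ρ (pairInvariants 𝕜 g h)
    rw [← pairInvariants_ofReal_smul g h ht.le, invariantProfile_pairInvariants hρ hinv hg,
      invariantProfile_pairInvariants hρ hinv hg, hρ g hg h _ (by simpa using ht.ne'),
      RCLike.norm_ofReal, abs_of_pos ht]
  -- off the range of `pairInvariants`, `Function.extend` takes the junk value `0` on both sides
  · have hmem' : ¬∃ x : G × H, pairInvariants 𝕜 (x.1 : H) x.2 = (r, t * a, t * b) :=
      fun h' => hmem (by simpa [inv_mul_cancel_left₀ ht.ne'] using hscale (inv_pos.mpr ht) h')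
    simp only [invariantProfile, Function.extend_apply' _ _ _ hmem,
      Function.extend_apply' _ _ _ hmem', Pi.zero_apply, mul_zero]

end Profile

theorem IsInvariantOpen.mem_of_norm_eq {G : Set H} (hG : IsInvariantOpen G) {g g' : H}
    (hg : g ∈ G) (hgg' : ‖g'‖ = ‖g‖) : g' ∈ G := by
  obtain ⟨R, -, rfl⟩ := hG
  simpa [hgg'] using hg

end

/-- for `α ∈ ℝ`, `0 ∉ G` and `ρ` with `ρ_g(r h) = |r|^α ρ_g(h)` for nonzero
scalars `r`, `ρ` is isometry-invariant iff there is `λ : (0,∞) × ℝ² → ℝ` which is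
`α`-positively-homogeneous, even in each of the last two variables, and such that
`ρ_g(h) = λ_{‖g‖}(|⟨h,g⟩|, √(‖h‖²‖g‖² − |⟨h,g⟩|²))`. -/
theorem stmt1 {𝕜 H : Type*} [RCLike 𝕜] [NormedAddCommGroup H] [InnerProductSpace 𝕜 H]
    (α : ℝ) (G : Set H) (hG : IsInvariantOpen G) (h0G : (0 : H) ∉ G)
    (ρ : H → H → ℝ)
    (hρ : ∀ g ∈ G, ∀ h : H, ∀ r : 𝕜, r ≠ 0 → ρ g (r • h) = ‖r‖ ^ α * ρ g h) :
    (∀ T : H →ₗᵢ[𝕜] H, ∀ g ∈ G, ∀ h : H, ρ (T g) (T h) = ρ g h) ↔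
      ∃ lam : ℝ → ℝ → ℝ → ℝ,
        (∀ r > (0 : ℝ), ∀ p q : ℝ, ∀ t > (0 : ℝ),
          lam r (t * p) (t * q) = t ^ α * lam r p q) ∧
        (∀ r > (0 : ℝ), ∀ p q : ℝ, lam r (-p) q = lam r p q ∧ lam r p (-q) = lam r p q) ∧
        (∀ g ∈ G, ∀ h : H,
          ρ g h = lam ‖g‖ ‖(inner 𝕜 g h : 𝕜)‖
            (Real.sqrt (‖h‖ ^ 2 * ‖g‖ ^ 2 - ‖(inner 𝕜 g h : 𝕜)‖ ^ 2))) := by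
  constructor
  · intro hinv
    refine ⟨fun r p q => invariantProfile 𝕜 G ρ (r, |p|, √(p ^ 2 + q ^ 2) / r), ?_, ?_, ?_⟩
    · intro r _ p q t ht
      have hsqrt : √((t * p) ^ 2 + (t * q) ^ 2) = t * √(p ^ 2 + q ^ 2) := by
        rw [show (t * p) ^ 2 + (t * q) ^ 2 = t ^ 2 * (p ^ 2 + q ^ 2) by ring,
          Real.sqrt_mul (sq_nonneg t), Real.sqrt_sq ht.le]
      simp only [abs_mul, abs_of_pos ht, hsqrt, mul_div_assoc]
      exact invariantProfile_smul hρ hinv _ _ _ ht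
    · intro r _ p q
      simp only [abs_neg, neg_sq, and_self]
    · intro g hg h
      have hg0 : ‖g‖ ≠ 0 := norm_ne_zero_iff.mpr (ne_of_mem_of_not_mem hg h0G)
      have hcs : ‖inner 𝕜 g h‖ ^ 2 ≤ ‖h‖ ^ 2 * ‖g‖ ^ 2 := by
        rw [← mul_pow, mul_comm]
        exact pow_le_pow_left₀ (norm_nonneg _) (norm_inner_le_norm g h) 2
      have hnorm : √(‖inner 𝕜 g h‖ ^ 2 + √(‖h‖ ^ 2 * ‖g‖ ^ 2 - ‖inner 𝕜 g h‖ ^ 2) ^ 2) / ‖g‖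
          = ‖h‖ := by
        rw [Real.sq_sqrt (sub_nonneg.mpr hcs), add_sub_cancel, ← mul_pow,
          Real.sqrt_sq (by positivity), mul_div_cancel_right₀ _ hg0]
      simp only [abs_norm, hnorm]
      exact (invariantProfile_pairInvariants hρ hinv hg h).symm
  · rintro ⟨lam, -, -, hrep⟩ T g hg h
    rw [hrep _ (hG.mem_of_norm_eq hg (T.norm_map g)), hrep g hg, T.norm_map, T.norm_map,
      T.inner_map_map]
end

section
/- Let ρ be a Finsler metric on an isometry-invariant open set G ⊆ H. Then ρ is isometry-invariant if and only if ρ_{Ug}(Uh) = ρ_g(h) for every surjective isometry (unitary) U of H and all g ∈ G, h ∈ H. In other words, invariance with respect to all unitaries already implies invariance with respect to all (not necessarily surjective) isometries. -/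
section

variable {𝕜 H : Type*} [RCLike 𝕜] [NormedAddCommGroup H] [InnerProductSpace 𝕜 H]

theorem Submodule.exists_linearIsometryEquiv_extend (K : Submodule 𝕜 H)
    [K.HasOrthogonalProjection] (S : K ≃ₗᵢ[𝕜] K) :
    ∃ U : H ≃ₗᵢ[𝕜] H, ∀ x : K, U x = S x :=
  ⟨K.orthogonalDecomposition.trans
      ((S.withLpProdCongr 2 (LinearIsometryEquiv.refl 𝕜 Kᗮ)).trans
        K.orthogonalDecomposition.symm), fun x => by simp⟩

theorem LinearIsometry.exists_linearIsometryEquiv_extend {S : Submodule 𝕜 H}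
    [FiniteDimensional 𝕜 S] (L : S →ₗᵢ[𝕜] H) :
    ∃ U : H ≃ₗᵢ[𝕜] H, ∀ s : S, U s = L s := by
  set W := S ⊔ LinearMap.range L.toLinearMap
  have hSW : S ≤ W := le_sup_left
  let L' : S.comap W.subtype →ₗᵢ[𝕜] W :=
    { toLinearMap :=
        (L.toLinearMap ∘ₗ (Submodule.comapSubtypeEquivOfLe hSW).toLinearMap).codRestrict W
          fun _ => Submodule.mem_sup_right (LinearMap.mem_range_self _ _)
      norm_map' := fun s => L.norm_map _ }
  have hsurj : Function.Surjective L'.extend :=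
    LinearMap.injective_iff_surjective.mp L'.extend.injective
  obtain ⟨U, hU⟩ := W.exists_linearIsometryEquiv_extend
    (LinearIsometryEquiv.ofSurjective L'.extend hsurj)
  refine ⟨U, fun s => ?_⟩
  rw [hU ⟨s, hSW s.2⟩]
  exact congrArg Subtype.val (L'.extend_apply ⟨⟨s, hSW s.2⟩, s.2⟩)

theorem LinearIsometry.exists_linearIsometryEquiv_eqOn_of_finite (T : H →ₗᵢ[𝕜] H)
    {s : Set H} (hs : s.Finite) :
    ∃ U : H ≃ₗᵢ[𝕜] H, Set.EqOn U T s := by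
  have := FiniteDimensional.span_of_finite 𝕜 hs
  obtain ⟨U, hU⟩ := (T.comp (Submodule.span 𝕜 s).subtypeₗᵢ).exists_linearIsometryEquiv_extend
  exact ⟨U, fun x hx => hU ⟨x, Submodule.subset_span hx⟩⟩

end

theorem stmt4_general {𝕜 H : Type*} [RCLike 𝕜] [NormedAddCommGroup H] [InnerProductSpace 𝕜 H]
    (G : Set H)
    (ρ : H → H → ℝ) :
    (∀ T : H →ₗᵢ[𝕜] H, ∀ g ∈ G, ∀ h : H, ρ (T g) (T h) = ρ g h) ↔
      (∀ U : H →ₗᵢ[𝕜] H, Function.Surjective U → ∀ g ∈ G, ∀ h : H,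
        ρ (U g) (U h) = ρ g h) := by
  refine ⟨fun hT U _ => hT U, fun hU T g hg h => ?_⟩
  obtain ⟨U, hUT⟩ := T.exists_linearIsometryEquiv_eqOn_of_finite (s := {g, h}) (by simp)
  rw [← hUT (by simp), ← hUT (by simp)]
  exact hU U.toLinearIsometry U.surjective g hg h

/-- a Finsler metric `ρ` on an isometry-invariant open set `G` is
isometry-invariant iff it is invariant with respect to every surjective isometry
(unitary) of `H`. -/
theorem stmt4 {𝕜 H : Type*} [RCLike 𝕜] [NormedAddCommGroup H] [InnerProductSpace 𝕜 H]
    (G : Set H) (hG : IsInvariantOpen G)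
    (ρ : H → H → ℝ)
    (hFinsler : ∀ g ∈ G, ∀ h : H, ∀ r : 𝕜, ρ g (r • h) = ‖r‖ * ρ g h) :
    (∀ T : H →ₗᵢ[𝕜] H, ∀ g ∈ G, ∀ h : H, ρ (T g) (T h) = ρ g h) ↔
      (∀ U : H →ₗᵢ[𝕜] H, Function.Surjective U → ∀ g ∈ G, ∀ h : H,
        ρ (U g) (U h) = ρ g h) :=
  stmt4_general G ρ
end

section
/- Let G ⊆ H be an isometry-invariant open set with 0 ∉ G and let σ be a sesquilinear field on G. Then σ is isometry-invariant if and only if there exist functions φ, ψ : (0,∞) → ℝ such that σ_g(f,h) = φ(‖g‖²)·⟨f,h⟩ + ψ(‖g‖²)·⟨f,g⟩·⟨g,h⟩ for every g ∈ G and all f, h ∈ H. -/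
/-- A sesquilinear field on `G`: for every `g ∈ G`, `σ_g` is linear in its first vector
argument, conjugate-linear in the second one, and conjugate-symmetric.  (The inner
product of the paper is linear in the first argument, so the paper's `⟨f,h⟩`
is Mathlib's `inner h f`.) -/
def IsSesquiField (𝕜 : Type*) {H : Type*} [RCLike 𝕜] [NormedAddCommGroup H]
    [InnerProductSpace 𝕜 H] (G : Set H) (σ : H → H → H → 𝕜) : Prop :=
  ∀ g ∈ G,
    (∀ f₁ f₂ h : H, σ g (f₁ + f₂) h = σ g f₁ h + σ g f₂ h) ∧
    (∀ (c : 𝕜) (f h : H), σ g (c • f) h = c * σ g f h) ∧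
    (∀ (f h₁ h₂ : H), σ g f (h₁ + h₂) = σ g f h₁ + σ g f h₂) ∧
    (∀ (c : 𝕜) (f h : H), σ g f (c • h) = starRingEnd 𝕜 c * σ g f h) ∧
    (∀ f h : H, σ g f h = starRingEnd 𝕜 (σ g h f))

/-
For fixed `g`, invariance of `σ` gives invariance of the form `σ_g` under every isometry fixing
`g`. The reflection in the hyperplane `yᗮ`, for `y` orthogonal to `g` and `f`, fixes `g` and `f`
and negates `y`, so `σ_g(f, y) = 0`. Thus on `gᗮ` the form `σ_g` vanishes on orthogonal pairs,
which forces it to be a real multiple of the inner product there: comparing `σ_g(x, x)` with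
`σ_g(z, z)` for orthogonal `x, z` uses the orthogonal pair `x + z`, `‖z‖²x - ‖x‖²z`.
Decomposing `f` and `h` along `g` then gives the representation at `g`. Since isometries
(a phase followed by a reflection) act transitively on spheres, the coefficients depend only
on `‖g‖`.
-/

open scoped InnerProductSpace ComplexConjugate

open Submodule

section

variable {𝕜 H : Type*} [RCLike 𝕜] [NormedAddCommGroup H] [InnerProductSpace 𝕜 H]

theorem exists_eq_smul_add_of_inner_eq_zero (x y : H) :
    ∃ (c : 𝕜) (z : H), y = c • x + z ∧ ⟪x, z⟫_𝕜 = 0 := by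
  obtain ⟨u, hu, z, hz, rfl⟩ := (𝕜 ∙ x).exists_add_mem_mem_orthogonal y
  obtain ⟨c, rfl⟩ := mem_span_singleton.1 hu
  exact ⟨c, z, rfl, mem_orthogonal_singleton_iff_inner_right.1 hz⟩

namespace LinearMap

variable {B : H →ₗ[𝕜] H →ₗ⋆[𝕜] 𝕜}

section Orthogonal

variable {W : Submodule 𝕜 H}
  (hB : ∀ x ∈ W, ∀ y ∈ W, ⟪x, y⟫_𝕜 = 0 → B x y = 0)
include hB

theorem inner_self_mul_apply_self_of_inner_eq_zero {x z : H} (hx : x ∈ W) (hz : z ∈ W)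
    (hxz : ⟪x, z⟫_𝕜 = 0) : ⟪z, z⟫_𝕜 * B x x = ⟪x, x⟫_𝕜 * B z z := by
  have hzx : ⟪z, x⟫_𝕜 = 0 := inner_eq_zero_symm.1 hxz
  have h := hB (x + z) (W.add_mem hx hz) (⟪z, z⟫_𝕜 • x - ⟪x, x⟫_𝕜 • z)
    (W.sub_mem (W.smul_mem _ hx) (W.smul_mem _ hz))
    (by simp only [inner_add_left, inner_sub_right, inner_smul_right, hxz, hzx]; ring)
  simp only [map_add, map_sub, map_smulₛₗ, add_apply, smul_eq_mul, inner_self_conj,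
    hB x hx z hz hxz, hB z hz x hx hzx] at h
  linear_combination h

theorem inner_self_mul_apply_self_comm {x y : H} (hx : x ∈ W) (hy : y ∈ W) :
    ⟪x, x⟫_𝕜 * B y y = ⟪y, y⟫_𝕜 * B x x := by
  obtain ⟨c, z, rfl, hxz⟩ := exists_eq_smul_add_of_inner_eq_zero (𝕜 := 𝕜) x y
  have hz : z ∈ W := (W.add_mem_iff_right (W.smul_mem c hx)).1 hy
  have hzx : ⟪z, x⟫_𝕜 = 0 := inner_eq_zero_symm.1 hxz
  have h := inner_self_mul_apply_self_of_inner_eq_zero hB hx hz hxz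
  simp only [map_add, map_smulₛₗ, add_apply, smul_apply, smul_eq_mul, RingHom.id_apply,
    inner_add_left, inner_add_right, inner_smul_left, inner_smul_right, hxz, hzx,
    hB x hx z hz hxz, hB z hz x hx hzx]
  linear_combination -h

theorem inner_self_mul_apply_comm {x y : H} (hx : x ∈ W) (hy : y ∈ W) :
    ⟪x, x⟫_𝕜 * B x y = ⟪y, x⟫_𝕜 * B x x := by
  obtain ⟨c, z, rfl, hxz⟩ := exists_eq_smul_add_of_inner_eq_zero (𝕜 := 𝕜) x y
  have hz : z ∈ W := (W.add_mem_iff_right (W.smul_mem c hx)).1 hy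
  simp only [map_add, map_smulₛₗ, smul_eq_mul, inner_add_left, inner_smul_left,
    inner_eq_zero_symm.1 hxz, hB x hx z hz hxz]
  ring

theorem exists_apply_eq_mul_inner : ∃ a : 𝕜, ∀ x ∈ W, ∀ y ∈ W, B x y = a * ⟪y, x⟫_𝕜 := by
  by_cases hW : ∃ x₀ ∈ W, x₀ ≠ 0
  · obtain ⟨x₀, hx₀, hx₀0⟩ := hW
    refine ⟨B x₀ x₀ / ⟪x₀, x₀⟫_𝕜, fun x hx y hy => ?_⟩
    rcases eq_or_ne x 0 with rfl | hx0
    · simp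
    have h₁ := inner_self_mul_apply_comm hB hx hy
    have h₂ := inner_self_mul_apply_self_comm hB hx₀ hx
    have h₀ : ⟪x₀, x₀⟫_𝕜 ≠ 0 := inner_self_ne_zero.2 hx₀0
    apply mul_left_cancel₀ (mul_ne_zero (inner_self_ne_zero.2 hx0) h₀)
    field_simp
    linear_combination ⟪x₀, x₀⟫_𝕜 * h₁ + ⟪y, x⟫_𝕜 * h₂
  · push Not at hW
    exact ⟨0, fun x hx y _ => by simp [hW x hx]⟩

theorem exists_real_apply_eq_mul_inner (hsymm : ∀ x y, B x y = conj (B y x)) :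
    ∃ a : ℝ, ∀ x ∈ W, ∀ y ∈ W, B x y = a * ⟪y, x⟫_𝕜 := by
  obtain ⟨a, ha⟩ := exists_apply_eq_mul_inner hB
  refine ⟨RCLike.re a, fun x hx y hy => ?_⟩
  have h : B x y = conj a * ⟪y, x⟫_𝕜 := by rw [hsymm, ha y hy x hx, map_mul, inner_conj_symm]
  rw [RCLike.re_eq_add_conj]
  linear_combination (ha x hx y hy + h) / 2

end Orthogonal

theorem exists_eq_inner_add_inner_mul_inner {g : H} (hsymm : ∀ x y, B x y = conj (B y x))
    (hB : ∀ f y, ⟪y, g⟫_𝕜 = 0 → ⟪y, f⟫_𝕜 = 0 → B f y = 0) :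
    ∃ a b : ℝ, ∀ f h, B f h = a * ⟪h, f⟫_𝕜 + b * ⟪g, f⟫_𝕜 * ⟪h, g⟫_𝕜 := by
  obtain ⟨a, ha⟩ := exists_real_apply_eq_mul_inner (W := (𝕜 ∙ g)ᗮ) (fun x _ y hy hxy =>
    hB x y (mem_orthogonal_singleton_iff_inner_left.1 hy) (inner_eq_zero_symm.1 hxy)) hsymm
  have hgg : B g g = (RCLike.re (B g g) : 𝕜) := (RCLike.conj_eq_iff_re.1 (hsymm g g).symm).symm
  set b : ℝ := (RCLike.re (B g g) - a * ‖g‖ ^ 2) / ‖g‖ ^ 4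
  have hb : B g g - (a : 𝕜) * ⟪g, g⟫_𝕜 = b * ⟪g, g⟫_𝕜 ^ 2 := by
    rcases eq_or_ne g 0 with rfl | hg
    · simp
    · rw [hgg, inner_self_eq_norm_sq_to_K]
      have : (‖g‖ : 𝕜) ≠ 0 := RCLike.ofReal_ne_zero.2 (norm_ne_zero_iff.2 hg)
      simp only [b]
      push_cast
      field_simp
  refine ⟨a, b, fun f h => ?_⟩
  obtain ⟨c, f', rfl, hgf'⟩ := exists_eq_smul_add_of_inner_eq_zero (𝕜 := 𝕜) g f
  obtain ⟨d, h', rfl, hgh'⟩ := exists_eq_smul_add_of_inner_eq_zero (𝕜 := 𝕜) g h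
  have hf' := mem_orthogonal_singleton_iff_inner_right.2 hgf'
  have hh' := mem_orthogonal_singleton_iff_inner_right.2 hgh'
  have hgh'0 : B g h' = 0 := hB g h' (inner_eq_zero_symm.1 hgh') (inner_eq_zero_symm.1 hgh')
  have hf'g0 : B f' g = 0 := by
    rw [hsymm, hB g f' (inner_eq_zero_symm.1 hgf') (inner_eq_zero_symm.1 hgf'), map_zero]
  simp only [map_add, map_smulₛₗ, add_apply, smul_apply, smul_eq_mul, RingHom.id_apply,
    inner_add_left, inner_add_right, inner_smul_left, inner_smul_right, hgf',
    inner_eq_zero_symm.1 hgh', hgh'0, hf'g0, ha f' hf' h' hh']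
  linear_combination c * conj d * hb

theorem apply_eq_zero_of_isometry_invariant {g : H}
    (hinv : ∀ T : H ≃ₗᵢ[𝕜] H, T g = g → ∀ f h, B (T f) (T h) = B f h)
    (f y : H) (hyg : ⟪y, g⟫_𝕜 = 0) (hyf : ⟪y, f⟫_𝕜 = 0) : B f y = 0 := by
  set R : H ≃ₗᵢ[𝕜] H := reflection (𝕜 ∙ y)ᗮ
  have hR : ∀ x, ⟪y, x⟫_𝕜 = 0 → R x = x := fun x hx =>
    reflection_mem_subspace_eq_self (mem_orthogonal_singleton_iff_inner_right.2 hx)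
  have h := hinv R (hR g hyg) f y
  rw [hR f hyf, reflection_orthogonalComplement_singleton_eq_neg, map_neg] at h
  exact self_eq_neg.1 h.symm

end LinearMap

theorem Submodule.reflection_sub_of_inner_comm {v w : H} (hnorm : ‖v‖ = ‖w‖)
    (hvw : ⟪v, w⟫_𝕜 = ⟪w, v⟫_𝕜) : reflection (𝕜 ∙ (v - w))ᗮ v = w := by
  set R : H ≃ₗᵢ[𝕜] H := reflection (𝕜 ∙ (v - w))ᗮ
  have hsub : R (v - w) = -(v - w) := reflection_orthogonalComplement_singleton_eq_neg (v - w)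
  have hadd : R (v + w) = v + w := by
    refine reflection_mem_subspace_eq_self (mem_orthogonal_singleton_iff_inner_right.2 ?_)
    rw [inner_sub_left, inner_add_right, inner_add_right, hvw, inner_self_eq_norm_sq_to_K,
      inner_self_eq_norm_sq_to_K, hnorm]
    ring
  calc R v = R ((2 : 𝕜)⁻¹ • (v + w) + (2 : 𝕜)⁻¹ • (v - w)) := by congr 1; module
    _ = w := by rw [map_add, map_smul, map_smul, hadd, hsub]; module

def LinearIsometryEquiv.smulOfNormEqOne (c : 𝕜) (hc : ‖c‖ = 1) : H ≃ₗᵢ[𝕜] H :=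
  { LinearEquiv.smulOfNeZero 𝕜 H c (norm_ne_zero_iff.1 (hc ▸ one_ne_zero)) with
    norm_map' := fun x => by simp [norm_smul, hc] }

theorem LinearIsometryEquiv.smulOfNormEqOne_apply (c : 𝕜) (hc : ‖c‖ = 1) (x : H) :
    smulOfNormEqOne c hc x = c • x := rfl

theorem exists_linearIsometryEquiv_apply_eq {v w : H} (h : ‖v‖ = ‖w‖) :
    ∃ T : H ≃ₗᵢ[𝕜] H, T v = w := by
  -- rotate `v` by a phase so that its inner product with `w` becomes real, then reflect
  obtain ⟨c, hc, hcvw⟩ := RCLike.exists_norm_eq_mul_self ⟪v, w⟫_𝕜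
  have hc' : ‖conj c‖ = 1 := by rwa [RCLike.norm_conj]
  set P := LinearIsometryEquiv.smulOfNormEqOne (H := H) (conj c) hc'
  have hPv : ⟪P v, w⟫_𝕜 = ‖⟪v, w⟫_𝕜‖ := by
    rw [LinearIsometryEquiv.smulOfNormEqOne_apply, inner_smul_left, RCLike.conj_conj, hcvw]
  refine ⟨P.trans (reflection (𝕜 ∙ (P v - w))ᗮ), ?_⟩
  rw [LinearIsometryEquiv.trans_apply]
  refine reflection_sub_of_inner_comm ((P.norm_map v).trans h) ?_
  rw [← inner_conj_symm w, hPv, RCLike.conj_ofReal]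

theorem exists_forall_mem_of_fiberwise {α β γ : Type*} [Nonempty γ] {s : Set α} (k : α → β)
    {P : α → γ → Prop} (h : ∀ x ∈ s, ∃ c, ∀ y ∈ s, k y = k x → P y c) :
    ∃ F : β → γ, ∀ x ∈ s, P x (F (k x)) := by
  refine ⟨fun t => Classical.epsilon fun c => ∀ y ∈ s, k y = t → P y c, fun x hx => ?_⟩
  exact Classical.epsilon_spec (p := fun c => ∀ y ∈ s, k y = k x → P y c) (h x hx) x hx rfl

theorem IsInvariantOpen.apply_mem {G : Set H} (hG : IsInvariantOpen G) (T : H →ₗᵢ[𝕜] H)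
    {g : H} (hg : g ∈ G) : T g ∈ G := by
  obtain ⟨R, -, rfl⟩ := hG
  simpa using hg

namespace IsSesquiField

variable {G : Set H} {σ : H → H → H → 𝕜}

def toForm (hσ : IsSesquiField 𝕜 G σ) {g : H} (hg : g ∈ G) : H →ₗ[𝕜] H →ₗ⋆[𝕜] 𝕜 :=
  LinearMap.mk₂'ₛₗ _ _ (σ g) (hσ g hg).1 (hσ g hg).2.1 (hσ g hg).2.2.1 (hσ g hg).2.2.2.1

theorem exists_eq_inner_add_inner_mul_inner (hσ : IsSesquiField 𝕜 G σ)
    (hinv : ∀ T : H →ₗᵢ[𝕜] H, ∀ g ∈ G, ∀ f h : H, σ (T g) (T f) (T h) = σ g f h)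
    {g : H} (hg : g ∈ G) :
    ∃ a b : ℝ, ∀ f h, σ g f h = a * ⟪h, f⟫_𝕜 + b * ⟪g, f⟫_𝕜 * ⟪h, g⟫_𝕜 :=
  (hσ.toForm hg).exists_eq_inner_add_inner_mul_inner (hσ g hg).2.2.2.2
    ((hσ.toForm hg).apply_eq_zero_of_isometry_invariant fun T hT f h => by
      simpa [toForm, hT] using hinv T.toLinearIsometry g hg f h)

end IsSesquiField

theorem eq_inner_add_inner_mul_inner_of_norm_eq {G : Set H} {σ : H → H → H → 𝕜}
    (hinv : ∀ T : H →ₗᵢ[𝕜] H, ∀ g ∈ G, ∀ f h : H, σ (T g) (T f) (T h) = σ g f h)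
    {g g₀ : H} (hg : g ∈ G) (hnorm : ‖g‖ = ‖g₀‖) {a b : ℝ}
    (hrep : ∀ f h, σ g₀ f h = a * ⟪h, f⟫_𝕜 + b * ⟪g₀, f⟫_𝕜 * ⟪h, g₀⟫_𝕜) (f h : H) :
    σ g f h = a * ⟪h, f⟫_𝕜 + b * ⟪g, f⟫_𝕜 * ⟪h, g⟫_𝕜 := by
  obtain ⟨T, rfl⟩ := exists_linearIsometryEquiv_apply_eq (𝕜 := 𝕜) hnorm
  rw [← hinv T.toLinearIsometry g hg f h]
  simp only [LinearIsometryEquiv.coe_toLinearIsometry, hrep, LinearIsometryEquiv.inner_map_map]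

end

theorem stmt5_general {𝕜 H : Type*} [RCLike 𝕜] [NormedAddCommGroup H] [InnerProductSpace 𝕜 H]
    (G : Set H) (hG : IsInvariantOpen G)
    (σ : H → H → H → 𝕜) (hσ : IsSesquiField 𝕜 G σ) :
    (∀ T : H →ₗᵢ[𝕜] H, ∀ g ∈ G, ∀ f h : H, σ (T g) (T f) (T h) = σ g f h) ↔
      ∃ φ ψ : ℝ → ℝ, ∀ g ∈ G, ∀ f h : H,
        σ g f h = (φ (‖g‖ ^ 2) : 𝕜) * (inner 𝕜 h f : 𝕜) +
          (ψ (‖g‖ ^ 2) : 𝕜) * (inner 𝕜 g f : 𝕜) * (inner 𝕜 h g : 𝕜) := by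
  constructor
  · intro hinv
    obtain ⟨F, hF⟩ := exists_forall_mem_of_fiberwise (γ := ℝ × ℝ) (s := G) (‖·‖ ^ 2)
      (P := fun g c => ∀ f h, σ g f h = c.1 * ⟪h, f⟫_𝕜 + c.2 * ⟪g, f⟫_𝕜 * ⟪h, g⟫_𝕜)
      fun g₀ hg₀ => by
        obtain ⟨a, b, hab⟩ := hσ.exists_eq_inner_add_inner_mul_inner hinv hg₀
        exact ⟨(a, b), fun g hg hnorm => eq_inner_add_inner_mul_inner_of_norm_eq hinv hg
          ((sq_eq_sq₀ (norm_nonneg _) (norm_nonneg _)).1 hnorm) hab⟩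
    exact ⟨fun t => (F t).1, fun t => (F t).2, hF⟩
  · rintro ⟨φ, ψ, hrep⟩ T g hg f h
    rw [hrep _ (hG.apply_mem T hg), hrep g hg, T.norm_map, T.inner_map_map, T.inner_map_map,
      T.inner_map_map]

/-- a sesquilinear field `σ` on an isometry-invariant open set `G` with
`0 ∉ G` is isometry-invariant iff there are `φ ψ : (0,∞) → ℝ` with
`σ_g(f,h) = φ(‖g‖²)⟨f,h⟩ + ψ(‖g‖²)⟨f,g⟩⟨g,h⟩`. -/
theorem stmt5 {𝕜 H : Type*} [RCLike 𝕜] [NormedAddCommGroup H] [InnerProductSpace 𝕜 H]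
    (G : Set H) (hG : IsInvariantOpen G) (h0G : (0 : H) ∉ G)
    (σ : H → H → H → 𝕜) (hσ : IsSesquiField 𝕜 G σ) :
    (∀ T : H →ₗᵢ[𝕜] H, ∀ g ∈ G, ∀ f h : H, σ (T g) (T f) (T h) = σ g f h) ↔
      ∃ φ ψ : ℝ → ℝ, ∀ g ∈ G, ∀ f h : H,
        σ g f h = (φ (‖g‖ ^ 2) : 𝕜) * (inner 𝕜 h f : 𝕜) +
          (ψ (‖g‖ ^ 2) : 𝕜) * (inner 𝕜 g f : 𝕜) * (inner 𝕜 h g : 𝕜) :=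
  stmt5_general G hG σ hσ
end

section
/- Let α > 0 with α ≠ 1, and let ρ be an isometry-invariant Finsler metric on H \ {0}. Then ρ is invariant with respect to the homothety x ↦ α·x (i.e., ρ_{αg}(αh) = ρ_g(h) for all nonzero g and all h) if and only if there exists a function ϑ : (0,∞) × [0, π/2] → ℝ satisfying ϑ(α·r, τ) = ϑ(r, τ) for all r > 0 and τ ∈ [0, π/2], such that ρ_g(h) = (‖h‖/‖g‖)·ϑ(‖g‖, ∠(g,h)) for every g ∈ H \ {0} and every h ∈ H \ {0}. -/
/-!
Linear isometries act transitively on pairs of vectors with the same norms and the same inner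
product: a phase rotation of a line followed by a reflection moves `g` to `g'`, and the same
construction moves the component of `h` orthogonal to `g'` into place while fixing `g'`. Both
maps only use orthogonal projections onto lines, so no completeness is needed. Combined with
homogeneity under unimodular scalars, `ρ_g(h)` depends only on `‖g‖`, `‖h‖` and `|⟪g, h⟫|`, so
`‖g‖ ρ_g(h) / ‖h‖` is a function `ϑ(‖g‖, ∠(g, h))`. Since `∠` is invariant under scaling,
invariance of `ρ` under `x ↦ α x` is exactly `α`-periodicity of `ϑ` in its first variable.
-/

/-- The acute angle `∠(g,h) = arccos(|⟨h,g⟩| / (‖h‖‖g‖))` between nonzero vectors. -/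
noncomputable def acuteAngle (𝕜 : Type*) {H : Type*} [RCLike 𝕜] [NormedAddCommGroup H]
    [InnerProductSpace 𝕜 H] (g h : H) : ℝ :=
  Real.arccos (‖(inner 𝕜 g h : 𝕜)‖ / (‖h‖ * ‖g‖))

section

variable {𝕜 H : Type*} [RCLike 𝕜] [NormedAddCommGroup H] [InnerProductSpace 𝕜 H]

local notation "⟪" x ", " y "⟫" => inner 𝕜 x y

theorem RCLike.exists_norm_eq_one_eq_mul {a b : 𝕜} (h : ‖a‖ = ‖b‖) :
    ∃ c : 𝕜, ‖c‖ = 1 ∧ a = c * b := by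
  rcases eq_or_ne b 0 with rfl | hb
  · exact ⟨1, norm_one, by simpa using h⟩
  · exact ⟨a / b, by rw [norm_div, h, div_self (norm_ne_zero_iff.2 hb)],
      (div_mul_cancel₀ a hb).symm⟩

namespace Submodule

variable (K : Submodule 𝕜 H) [K.HasOrthogonalProjection] {c : 𝕜}

noncomputable def phaseRotation (hc : ‖c‖ = 1) : H →ₗᵢ[𝕜] H where
  toLinearMap := LinearMap.id + (c - 1) • K.starProjection.toLinearMap
  norm_map' x := by
    change ‖x + (c - 1) • K.starProjection x‖ = ‖x‖
    set p := K.starProjection x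
    have hx : x + (c - 1) • p = c • p + (x - p) := by
      rw [sub_smul, one_smul]; abel
    have horth : ⟪c • p, x - p⟫ = 0 :=
      inner_right_of_mem_orthogonal (K.smul_mem c (K.starProjection_apply_mem x))
        (K.sub_starProjection_mem_orthogonal x)
    have hsq : ‖c • p + (x - p)‖ ^ 2 = ‖x‖ ^ 2 := by
      rw [sq, norm_add_sq_eq_norm_sq_add_norm_sq_of_inner_eq_zero _ _ horth, norm_smul, hc,
        one_mul, K.norm_sq_eq_add_norm_sq_starProjection x, starProjection_orthogonal_val]
      ring
    rw [hx]
    exact (sq_eq_sq₀ (norm_nonneg _) (norm_nonneg _)).1 hsq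

variable {K}

theorem phaseRotation_apply_of_mem (hc : ‖c‖ = 1) {x : H} (hx : x ∈ K) :
    K.phaseRotation hc x = c • x := by
  change x + (c - 1) • K.starProjection x = c • x
  rw [starProjection_eq_self_iff.2 hx, sub_smul, one_smul]; abel

theorem phaseRotation_apply_of_mem_orthogonal (hc : ‖c‖ = 1) {x : H} (hx : x ∈ Kᗮ) :
    K.phaseRotation hc x = x := by
  change x + (c - 1) • K.starProjection x = x
  rw [(starProjection_apply_eq_zero_iff K).2 hx, smul_zero, add_zero]

theorem reflection_sub_of_inner_comm_s7 {v w : H} (h : ‖v‖ = ‖w‖) (hvw : ⟪v, w⟫ = ⟪w, v⟫) :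
    reflection (𝕜 ∙ (v - w))ᗮ v = w := by
  set R : H ≃ₗᵢ[𝕜] H := reflection (𝕜 ∙ (v - w))ᗮ
  suffices R v + R v = w + w by
    apply smul_right_injective H (by simp : (2 : 𝕜) ≠ 0)
    simpa [two_smul] using this
  have h₁ : R (v - w) = -(v - w) := reflection_orthogonalComplement_singleton_eq_neg (v - w)
  have h₂ : R (v + w) = v + w := by
    apply reflection_mem_subspace_eq_self
    rw [mem_orthogonal_singleton_iff_inner_left, inner_add_left, inner_sub_right, inner_sub_right,
      inner_self_eq_norm_sq_to_K, inner_self_eq_norm_sq_to_K, h, hvw]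
    ring
  convert! congr_arg₂ (· + ·) h₂ h₁ using 1
  · simp
  · abel

end Submodule

open Submodule

theorem exists_linearIsometry_apply_eq_of_norm_eq {u v : H} (h : ‖u‖ = ‖v‖) :
    ∃ T : H →ₗᵢ[𝕜] H, T u = v ∧ ∀ x, ⟪u, x⟫ = 0 → ⟪v, x⟫ = 0 → T x = x := by
  obtain ⟨c, hc, hcuv⟩ :=
    RCLike.exists_norm_eq_one_eq_mul (a := ((‖⟪u, v⟫‖ : ℝ) : 𝕜)) (b := ⟪u, v⟫) (by simp)
  -- The phase rotation makes `⟪u', v⟫` real, so the reflection in `(u' - v)ᗮ` swaps `u'` and `v`.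
  have hc' : ‖starRingEnd 𝕜 c‖ = 1 := by rwa [RCLike.norm_conj]
  set u' := starRingEnd 𝕜 c • u
  have hu' : ‖u'‖ = ‖v‖ := by rw [norm_smul, hc', one_mul, h]
  have hreal : ⟪u', v⟫ = ⟪v, u'⟫ := by
    rw [← inner_conj_symm v u', inner_smul_left, RCLike.conj_conj, ← hcuv, RCLike.conj_ofReal]
  refine ⟨(reflection (𝕜 ∙ (u' - v))ᗮ).toLinearIsometry.comp ((𝕜 ∙ u).phaseRotation hc'),
    ?_, fun x hux hvx => ?_⟩
  · simp only [LinearIsometry.coe_comp, Function.comp_apply,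
      LinearIsometryEquiv.coe_toLinearIsometry,
      phaseRotation_apply_of_mem hc' (mem_span_singleton_self u)]
    exact reflection_sub_of_inner_comm_s7 hu' hreal
  · have hx : ⟪u' - v, x⟫ = 0 := by rw [inner_sub_left, inner_smul_left, hux, hvx]; simp
    simp only [LinearIsometry.coe_comp, Function.comp_apply,
      LinearIsometryEquiv.coe_toLinearIsometry,
      phaseRotation_apply_of_mem_orthogonal hc' ((mem_orthogonal_singleton_iff_inner_right).2 hux)]
    exact reflection_mem_subspace_eq_self ((mem_orthogonal_singleton_iff_inner_right).2 hx)

theorem exists_linearIsometry_apply_eq_apply_eq {g g' h h' : H} (hg : ‖g‖ = ‖g'‖)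
    (hh : ‖h‖ = ‖h'‖) (hgh : ⟪g, h⟫ = ⟪g', h'⟫) : ∃ T : H →ₗᵢ[𝕜] H, T g = g' ∧ T h = h' := by
  obtain ⟨T₁, hT₁, -⟩ := exists_linearIsometry_apply_eq_of_norm_eq (𝕜 := 𝕜) hg
  set P := (𝕜 ∙ g').starProjection
  have hP : P (T₁ h) = P h' := by
    rw [starProjection_singleton, starProjection_singleton, ← hgh, ← T₁.inner_map_map g, hT₁]
  have hw : ‖T₁ h - P (T₁ h)‖ = ‖h' - P h'‖ := by
    have pythagoras (x : H) : ‖x‖ ^ 2 = ‖P x‖ ^ 2 + ‖x - P x‖ ^ 2 := by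
      rw [norm_sq_eq_add_norm_sq_starProjection x (𝕜 ∙ g'), starProjection_orthogonal_val]
    have h₁ := pythagoras (T₁ h)
    have h₂ := pythagoras h'
    rw [T₁.norm_map, hh, hP] at h₁
    rw [hP]
    exact (sq_eq_sq₀ (norm_nonneg _) (norm_nonneg _)).1 (by linarith)
  have horth : ∀ x, ⟪x - P x, g'⟫ = 0 := fun x =>
    inner_left_of_mem_orthogonal (mem_span_singleton_self g') (sub_starProjection_mem_orthogonal x)
  obtain ⟨T₂, hT₂, hfix⟩ := exists_linearIsometry_apply_eq_of_norm_eq (𝕜 := 𝕜) hw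
  have hg'fix : T₂ g' = g' := hfix g' (horth _) (horth _)
  have hPfix : T₂ (P (T₁ h)) = P (T₁ h) := by
    obtain ⟨a, ha⟩ := mem_span_singleton.1 (starProjection_apply_mem (𝕜 ∙ g') (T₁ h))
    rw [← ha, map_smul, hg'fix]
  refine ⟨T₂.comp T₁, by simp [hT₁, hg'fix], ?_⟩
  calc T₂ (T₁ h) = T₂ (P (T₁ h) + (T₁ h - P (T₁ h))) := by rw [add_sub_cancel]
    _ = P h' + (h' - P h') := by rw [map_add, hPfix, hT₂, hP]
    _ = h' := add_sub_cancel _ _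

theorem cos_acuteAngle (g h : H) : Real.cos (acuteAngle 𝕜 g h) = ‖⟪g, h⟫‖ / (‖h‖ * ‖g‖) := by
  refine Real.cos_arccos (by linarith [show 0 ≤ ‖⟪g, h⟫‖ / (‖h‖ * ‖g‖) by positivity]) ?_
  exact div_le_one_of_le₀ ((norm_inner_le_norm g h).trans_eq (mul_comm _ _)) (by positivity)

theorem acuteAngle_mem_Icc (g h : H) : acuteAngle 𝕜 g h ∈ Set.Icc 0 (Real.pi / 2) :=
  ⟨Real.arccos_nonneg _, Real.arccos_le_pi_div_two.2 (by positivity)⟩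

theorem acuteAngle_smul_left {a : 𝕜} (ha : a ≠ 0) (g h : H) :
    acuteAngle 𝕜 (a • g) h = acuteAngle 𝕜 g h := by
  rw [acuteAngle, acuteAngle, inner_smul_left, norm_mul, RCLike.norm_conj, norm_smul,
    mul_left_comm, mul_div_mul_left _ _ (norm_ne_zero_iff.2 ha)]

theorem acuteAngle_smul_right {a : 𝕜} (ha : a ≠ 0) (g h : H) :
    acuteAngle 𝕜 g (a • h) = acuteAngle 𝕜 g h := by
  rw [acuteAngle, acuteAngle, inner_smul_right, norm_mul, norm_smul, mul_assoc,
    mul_div_mul_left _ _ (norm_ne_zero_iff.2 ha)]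

variable (𝕜) in
def IsFinslerMetric (ρ : H → H → ℝ) : Prop :=
  ∀ g : H, g ≠ 0 → ∀ h : H, ∀ r : 𝕜, ρ g (r • h) = ‖r‖ * ρ g h

variable (𝕜) in
def IsIsometryInvariant (ρ : H → H → ℝ) : Prop :=
  ∀ T : H →ₗᵢ[𝕜] H, ∀ g : H, g ≠ 0 → ∀ h : H, ρ (T g) (T h) = ρ g h

variable {ρ : H → H → ℝ}

theorem IsFinslerMetric.apply_zero (hρ : IsFinslerMetric 𝕜 ρ) {g : H} (hg : g ≠ 0) :
    ρ g 0 = 0 := by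
  simpa using hρ g hg 0 0

theorem IsFinslerMetric.eq_of_norm_inner_eq (hρ : IsFinslerMetric 𝕜 ρ)
    (hT : IsIsometryInvariant 𝕜 ρ) {g g' h h' : H} (hg : g ≠ 0) (hg' : g' ≠ 0)
    (hgg' : ‖g‖ = ‖g'‖) (hhh' : ‖h‖ = ‖h'‖) (hinner : ‖⟪g, h⟫‖ = ‖⟪g', h'⟫‖) :
    ρ g h = ρ g' h' := by
  obtain ⟨c, hc, hgh⟩ := RCLike.exists_norm_eq_one_eq_mul hinner
  rw [← inner_smul_right] at hgh
  obtain ⟨T, rfl, hTh⟩ := exists_linearIsometry_apply_eq_apply_eq hgg'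
    (by rw [hhh', norm_smul, hc, one_mul]) hgh
  rw [← hT T g hg h, hTh, hρ _ hg', hc, one_mul]

theorem IsFinslerMetric.div_norm_eq_of_acuteAngle_eq (hρ : IsFinslerMetric 𝕜 ρ)
    (hT : IsIsometryInvariant 𝕜 ρ) {g g' h h' : H} (hg : g ≠ 0) (hg' : g' ≠ 0) (hh : h ≠ 0)
    (hh' : h' ≠ 0) (hgg' : ‖g‖ = ‖g'‖) (hangle : acuteAngle 𝕜 g h = acuteAngle 𝕜 g' h') :
    ρ g h / ‖h‖ = ρ g' h' / ‖h'‖ := by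
  have hcos := congrArg Real.cos hangle
  rw [cos_acuteAngle, cos_acuteAngle, hgg'] at hcos
  have key := hρ.eq_of_norm_inner_eq hT (h := (‖h'‖ : 𝕜) • h) (h' := (‖h‖ : 𝕜) • h') hg hg' hgg'
    (by simp only [norm_smul, RCLike.norm_ofReal, abs_norm, mul_comm])
    (by
      simp only [inner_smul_right, norm_mul, RCLike.norm_ofReal, abs_norm]
      field_simp at hcos
      linarith)
  rw [hρ g hg, hρ g' hg'] at key
  simp only [RCLike.norm_ofReal, abs_norm] at key
  field_simp
  linarith

variable (𝕜) in
/-- The function `ϑ`. It is `0` at the `(r, τ)` realised by no pair of nonzero vectors, since in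
low dimension not every angle occurs. -/
noncomputable def finslerProfile (ρ : H → H → ℝ) (r τ : ℝ) : ℝ :=
  Function.extend
    (fun p : {p : H × H // p.1 ≠ 0 ∧ p.2 ≠ 0} => (‖p.1.1‖, acuteAngle 𝕜 p.1.1 p.1.2))
    (fun p => ‖p.1.1‖ * (ρ p.1.1 p.1.2 / ‖p.1.2‖)) 0 (r, τ)

theorem IsFinslerMetric.finslerProfile_apply (hρ : IsFinslerMetric 𝕜 ρ)
    (hT : IsIsometryInvariant 𝕜 ρ) {g h : H} (hg : g ≠ 0) (hh : h ≠ 0) :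
    finslerProfile 𝕜 ρ ‖g‖ (acuteAngle 𝕜 g h) = ‖g‖ * (ρ g h / ‖h‖) := by
  refine Function.FactorsThrough.extend_apply (fun p q hpq => ?_) (0 : ℝ × ℝ → ℝ)
    (⟨(g, h), hg, hh⟩ : {p : H × H // p.1 ≠ 0 ∧ p.2 ≠ 0})
  obtain ⟨hnorm, hangle⟩ := Prod.mk.inj hpq
  rw [hnorm, hρ.div_norm_eq_of_acuteAngle_eq hT p.2.1 q.2.1 p.2.2 q.2.2 hnorm hangle]

theorem IsFinslerMetric.finslerProfile_mul (hρ : IsFinslerMetric 𝕜 ρ)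
    (hT : IsIsometryInvariant 𝕜 ρ) {α : ℝ} (hα : 0 < α)
    (hom : ∀ g : H, g ≠ 0 → ∀ h : H, ρ ((α : 𝕜) • g) ((α : 𝕜) • h) = ρ g h) (r τ : ℝ) :
    finslerProfile 𝕜 ρ (α * r) τ = finslerProfile 𝕜 ρ r τ := by
  have hα𝕜 : (α : 𝕜) ≠ 0 := RCLike.ofReal_ne_zero.2 hα.ne'
  have hαnorm : ‖(α : 𝕜)‖ = α := RCLike.norm_of_nonneg hα.le
  by_cases hr : ∃ g h : H, g ≠ 0 ∧ h ≠ 0 ∧ ‖g‖ = r ∧ acuteAngle 𝕜 g h = τ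
  · obtain ⟨g, h, hg, hh, rfl, rfl⟩ := hr
    have hαg : (α : 𝕜) • g ≠ 0 := smul_ne_zero hα𝕜 hg
    have hscale : α * ρ ((α : 𝕜) • g) h = ρ g h := by
      rw [← hom g hg h, hρ _ hαg, hαnorm]
    have h' := hρ.finslerProfile_apply hT hαg hh
    rw [norm_smul, hαnorm, acuteAngle_smul_left hα𝕜] at h'
    rw [h', hρ.finslerProfile_apply hT hg hh, ← hscale]
    ring
  · unfold finslerProfile
    rw [Function.extend_apply', Function.extend_apply']
    · rfl
    · rintro ⟨⟨⟨g, h⟩, hg, hh⟩, he⟩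
      exact hr ⟨g, h, hg, hh, congrArg Prod.fst he, congrArg Prod.snd he⟩
    · rintro ⟨⟨⟨g, h⟩, hg, hh⟩, he⟩
      obtain ⟨hnorm, hangle⟩ := Prod.mk.inj he
      refine hr ⟨(α⁻¹ : 𝕜) • g, h, smul_ne_zero (inv_ne_zero hα𝕜) hg, hh, ?_, ?_⟩
      · rw [norm_smul, norm_inv, hαnorm, hnorm, inv_mul_cancel_left₀ hα.ne']
      · rw [acuteAngle_smul_left (inv_ne_zero hα𝕜), hangle]

end

theorem stmt7_general {𝕜 H : Type*} [RCLike 𝕜] [NormedAddCommGroup H] [InnerProductSpace 𝕜 H]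
    (α : ℝ) (hα : 0 < α)
    (ρ : H → H → ℝ)
    (hFinsler : ∀ g : H, g ≠ 0 → ∀ h : H, ∀ r : 𝕜, ρ g (r • h) = ‖r‖ * ρ g h)
    (hinv : ∀ T : H →ₗᵢ[𝕜] H, ∀ g : H, g ≠ 0 → ∀ h : H, ρ (T g) (T h) = ρ g h) :
    (∀ g : H, g ≠ 0 → ∀ h : H, ρ ((α : 𝕜) • g) ((α : 𝕜) • h) = ρ g h) ↔
      ∃ ϑ : ℝ → ℝ → ℝ,
        (∀ r > (0 : ℝ), ∀ τ ∈ Set.Icc (0 : ℝ) (Real.pi / 2), ϑ (α * r) τ = ϑ r τ) ∧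
        (∀ g h : H, g ≠ 0 → h ≠ 0 →
          ρ g h = ‖h‖ / ‖g‖ * ϑ ‖g‖ (acuteAngle 𝕜 g h)) := by
  have hρ : IsFinslerMetric 𝕜 ρ := hFinsler
  have hα𝕜 : (α : 𝕜) ≠ 0 := RCLike.ofReal_ne_zero.2 hα.ne'
  constructor
  · refine fun hom => ⟨finslerProfile 𝕜 ρ, fun r _ τ _ => hρ.finslerProfile_mul hinv hα hom r τ,
      fun g h hg hh => ?_⟩
    rw [hρ.finslerProfile_apply hinv hg hh]
    field_simp
  · rintro ⟨ϑ, hϑ, hrep⟩ g hg h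
    have hαg : (α : 𝕜) • g ≠ 0 := smul_ne_zero hα𝕜 hg
    rcases eq_or_ne h 0 with rfl | hh
    · rw [smul_zero, hρ.apply_zero hg, hρ.apply_zero hαg]
    rw [hrep _ _ hαg (smul_ne_zero hα𝕜 hh), hrep g h hg hh, acuteAngle_smul_left hα𝕜,
      acuteAngle_smul_right hα𝕜, norm_smul, norm_smul, RCLike.norm_of_nonneg hα.le,
      mul_div_mul_left _ _ hα.ne', hϑ _ (norm_pos_iff.2 hg) _ (acuteAngle_mem_Icc g h)]

/-- an isometry-invariant Finsler metric `ρ` on `H \ {0}` is invariant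
with respect to the homothety `x ↦ α x` (`α > 0`, `α ≠ 1`) iff there is
`ϑ : (0,∞) × [0,π/2] → ℝ` with `ϑ(αr,τ) = ϑ(r,τ)` such that
`ρ_g(h) = (‖h‖/‖g‖) ϑ(‖g‖, ∠(g,h))` for all nonzero `g, h`. -/
theorem stmt7 {𝕜 H : Type*} [RCLike 𝕜] [NormedAddCommGroup H] [InnerProductSpace 𝕜 H]
    (α : ℝ) (hα : 0 < α) (hα1 : α ≠ 1)
    (ρ : H → H → ℝ)
    (hFinsler : ∀ g : H, g ≠ 0 → ∀ h : H, ∀ r : 𝕜, ρ g (r • h) = ‖r‖ * ρ g h)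
    (hinv : ∀ T : H →ₗᵢ[𝕜] H, ∀ g : H, g ≠ 0 → ∀ h : H, ρ (T g) (T h) = ρ g h) :
    (∀ g : H, g ≠ 0 → ∀ h : H, ρ ((α : 𝕜) • g) ((α : 𝕜) • h) = ρ g h) ↔
      ∃ ϑ : ℝ → ℝ → ℝ,
        (∀ r > (0 : ℝ), ∀ τ ∈ Set.Icc (0 : ℝ) (Real.pi / 2), ϑ (α * r) τ = ϑ r τ) ∧
        (∀ g h : H, g ≠ 0 → h ≠ 0 →
          ρ g h = ‖h‖ / ‖g‖ * ϑ ‖g‖ (acuteAngle 𝕜 g h)) :=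
  stmt7_general α hα ρ hFinsler hinv
end

section
/- Let σ be a sesquilinear field on G = H \ {0}. Then σ is invariant with respect to every congruence of H (i.e., σ_{Tg}(Tf,Th) = σ_g(f,h) for every linear map T that is a nonzero scalar multiple of an isometry, all nonzero g, and all f, h ∈ H) if and only if there exist a, b ∈ ℝ such that σ_g(f,h) = (a/‖g‖²)·⟨f,h⟩ + (b/‖g‖⁴)·⟨f,g⟩·⟨g,h⟩ for every nonzero g ∈ H and all f, h ∈ H. -/
/-!
Taking `T = id` shows `σ_{c g} = ‖c‖⁻² σ_g`, so it suffices to treat unit vectors `g`.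
A reflection composed with a phase maps any unit vector to any other, and (fixing the
first) any orthonormal pair to any other; hence `β = σ_g(g,g)` and `α = σ_g(x,x)`, for unit
`x ⊥ g`, are real constants. The reflection in the line `𝕜 g` gives `σ_g(f,g) = 0` for
`f ⊥ g`, and the one in the line `𝕜 x` gives `σ_g(x,y) = 0` for `x ⊥ g, y`. Splitting `f`
and `h` along `g` and `gᗮ` then yields the formula with `a = α` and `b = β - α`.
-/

section

open scoped InnerProductSpace ComplexConjugate

variable {𝕜 H : Type*} [RCLike 𝕜] [NormedAddCommGroup H] [InnerProductSpace 𝕜 H]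

namespace Submodule

theorem reflection_span_singleton_self (x : H) : reflection (𝕜 ∙ x) x = x :=
  reflection_mem_subspace_eq_self (mem_span_singleton_self x)

theorem reflection_span_singleton_eq_neg {x z : H} (h : ⟪x, z⟫_𝕜 = 0) :
    reflection (𝕜 ∙ x) z = -z :=
  reflection_mem_subspace_orthogonalComplement_eq_neg
    (mem_orthogonal_singleton_iff_inner_right.mpr h)

end Submodule

open Submodule

theorem ne_zero_of_norm_eq_one {E : Type*} [SeminormedAddGroup E] {x : E} (h : ‖x‖ = 1) :
    x ≠ 0 :=
  ne_zero_of_norm_ne_zero (h ▸ one_ne_zero)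

theorem exists_linearIsometryEquiv_apply_eq_unit_smul {u v : H} (huv : ‖u‖ = ‖v‖) :
    ∃ (c : 𝕜) (R : H ≃ₗᵢ[𝕜] H), ‖c‖ = 1 ∧ R u = c • v ∧
      ∀ z, ⟪u, z⟫_𝕜 = 0 → ⟪v, z⟫_𝕜 = 0 → R z = -z := by
  -- The phase `c` makes `⟪u, c • v⟫` real, hence `u + c • v ⊥ u - c • v`, and the reflection
  -- in the line through `u + c • v` swaps `u` and `c • v`.
  obtain ⟨c, hc, hreal⟩ := RCLike.exists_norm_eq_mul_self (⟪u, v⟫_𝕜)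
  set w := u + c • v
  have hperp : ⟪w, u - c • v⟫_𝕜 = 0 := by
    have h₁ : ⟪u, c • v⟫_𝕜 = ‖⟪u, v⟫_𝕜‖ := by rw [inner_smul_right, hreal]
    have h₂ : ⟪c • v, u⟫_𝕜 = ‖⟪u, v⟫_𝕜‖ := by rw [← inner_conj_symm, h₁, RCLike.conj_ofReal]
    simp only [w, inner_add_left, inner_sub_right, h₁, h₂, inner_self_eq_norm_sq_to_K,
      norm_smul, hc, one_mul, huv]
    ring
  refine ⟨c, reflection (𝕜 ∙ w), hc, ?_, fun z hu hv => reflection_span_singleton_eq_neg ?_⟩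
  · calc reflection (𝕜 ∙ w) u = reflection (𝕜 ∙ w) ((2⁻¹ : 𝕜) • (w + (u - c • v))) := by
          congr 1; module
      _ = (2⁻¹ : 𝕜) • (w - (u - c • v)) := by
          rw [map_smul, map_add, reflection_span_singleton_self,
            reflection_span_singleton_eq_neg hperp, ← sub_eq_add_neg]
      _ = c • v := by module
  · rw [inner_add_left, inner_smul_left, hu, hv, mul_zero, add_zero]

namespace IsSesquiField

variable {G : Set H} {σ : H → H → H → 𝕜} (hσ : IsSesquiField 𝕜 G σ) {g : H} (hg : g ∈ G)
include hσ hg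

theorem map_add_left (f₁ f₂ h : H) : σ g (f₁ + f₂) h = σ g f₁ h + σ g f₂ h := (hσ g hg).1 ..

theorem map_smul_left (c : 𝕜) (f h : H) : σ g (c • f) h = c * σ g f h := (hσ g hg).2.1 ..

theorem map_add_right (f h₁ h₂ : H) : σ g f (h₁ + h₂) = σ g f h₁ + σ g f h₂ :=
  (hσ g hg).2.2.1 ..

theorem map_smul_right (c : 𝕜) (f h : H) : σ g f (c • h) = conj c * σ g f h :=
  (hσ g hg).2.2.2.1 ..

theorem conj_symm (f h : H) : conj (σ g h f) = σ g f h := ((hσ g hg).2.2.2.2 ..).symm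

theorem map_zero_left (h : H) : σ g 0 h = 0 := by
  simpa using hσ.map_smul_left hg 0 0 h

theorem map_neg_left (f h : H) : σ g (-f) h = -σ g f h := by
  simpa using hσ.map_smul_left hg (-1) f h

theorem map_neg_right (f h : H) : σ g f (-h) = -σ g f h := by
  simpa using hσ.map_smul_right hg (-1) f h

theorem map_smul_smul (c : 𝕜) (f h : H) : σ g (c • f) (c • h) = (‖c‖ : 𝕜) ^ 2 * σ g f h := by
  rw [hσ.map_smul_left hg, hσ.map_smul_right hg, ← mul_assoc, RCLike.mul_conj]

theorem ofReal_re_apply_self (f : H) : (RCLike.re (σ g f f) : 𝕜) = σ g f f :=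
  RCLike.conj_eq_iff_re.mp (hσ.conj_symm hg f f)

end IsSesquiField

def IsCongruenceInvariant (σ : H → H → H → 𝕜) : Prop :=
  ∀ c : 𝕜, c ≠ 0 → ∀ T : H →ₗᵢ[𝕜] H, ∀ g : H, g ≠ 0 → ∀ f h : H,
    σ (c • T g) (c • T f) (c • T h) = σ g f h

variable (𝕜) in
noncomputable def invariantField (a b : ℝ) (g f h : H) : 𝕜 :=
  ((a / ‖g‖ ^ 2 : ℝ) : 𝕜) * ⟪h, f⟫_𝕜 + ((b / ‖g‖ ^ 4 : ℝ) : 𝕜) * ⟪g, f⟫_𝕜 * ⟪h, g⟫_𝕜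

theorem isCongruenceInvariant_invariantField (a b : ℝ) :
    IsCongruenceInvariant (invariantField 𝕜 a b : H → H → H → 𝕜) := by
  intro c hc T g _ f h
  have hinner : ∀ x y : H, ⟪c • T x, c • T y⟫_𝕜 = (‖c‖ : 𝕜) ^ 2 * ⟪x, y⟫_𝕜 := fun x y => by
    rw [inner_smul_left, inner_smul_right, T.inner_map_map, ← mul_assoc, RCLike.conj_mul]
  have hc' : (‖c‖ : 𝕜) ≠ 0 := by simpa using hc
  simp only [invariantField, hinner, norm_smul, T.norm_map]
  push_cast
  field_simp

namespace IsCongruenceInvariant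

variable {σ : H → H → H → 𝕜} (hinv : IsCongruenceInvariant σ)
  (hσ : IsSesquiField 𝕜 {x : H | x ≠ 0} σ)
include hinv hσ

theorem apply_smul_base {c : 𝕜} (hc : c ≠ 0) {g : H} (hg : g ≠ 0) (f h : H) :
    σ (c • g) f h = ((‖c‖ ^ 2)⁻¹ : ℝ) * σ g f h := by
  have h₁ := hinv c hc LinearIsometry.id g hg f h
  rw [LinearIsometry.id_apply, LinearIsometry.id_apply, LinearIsometry.id_apply,
    hσ.map_smul_smul (smul_ne_zero hc hg)] at h₁
  have hc' : (‖c‖ : 𝕜) ≠ 0 := by simpa using hc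
  rw [← h₁]
  push_cast
  field_simp

theorem apply_unit_smul_base {c : 𝕜} (hc : ‖c‖ = 1) {g : H} (hg : g ≠ 0) (f h : H) :
    σ (c • g) f h = σ g f h := by
  rw [hinv.apply_smul_base hσ (norm_ne_zero_iff.mp (by simp [hc])) hg, hc]
  simp

omit hσ in
theorem apply_linearIsometryEquiv (R : H ≃ₗᵢ[𝕜] H) {g : H} (hg : g ≠ 0) (f h : H) :
    σ (R g) (R f) (R h) = σ g f h := by
  simpa using hinv 1 one_ne_zero R.toLinearIsometry g hg f h

theorem apply_linearIsometryEquiv_of_apply_eq_unit_smul (R : H ≃ₗᵢ[𝕜] H) {g g' : H}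
    (hg : g ≠ 0) (hg' : g' ≠ 0) {c : 𝕜} (hc : ‖c‖ = 1) (hR : R g' = c • g) (f h : H) :
    σ g (R f) (R h) = σ g' f h := by
  rw [← hinv.apply_unit_smul_base hσ hc hg, ← hR, hinv.apply_linearIsometryEquiv R hg']

theorem apply_self_self_eq {g g' : H} (hg : ‖g‖ = 1) (hg' : ‖g'‖ = 1) :
    σ g g g = σ g' g' g' := by
  obtain ⟨c, R, hc, hR, -⟩ :=
    exists_linearIsometryEquiv_apply_eq_unit_smul (𝕜 := 𝕜) (hg'.trans hg.symm)
  rw [← hinv.apply_linearIsometryEquiv_of_apply_eq_unit_smul hσ R (ne_zero_of_norm_eq_one hg)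
    (ne_zero_of_norm_eq_one hg') hc hR, hR, hσ.map_smul_smul (ne_zero_of_norm_eq_one hg), hc]
  simp

theorem apply_self_right_eq_zero {g f : H} (hg : g ≠ 0) (hgf : ⟪g, f⟫_𝕜 = 0) : σ g f g = 0 := by
  have h := hinv.apply_linearIsometryEquiv (reflection (𝕜 ∙ g)) hg f g
  rw [reflection_span_singleton_self, reflection_span_singleton_eq_neg hgf,
    hσ.map_neg_left hg] at h
  exact neg_eq_self.mp h

theorem apply_eq_zero_of_orthogonal {g x y : H} (hg : g ≠ 0) (hgx : ⟪g, x⟫_𝕜 = 0)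
    (hxy : ⟪x, y⟫_𝕜 = 0) : σ g x y = 0 := by
  have h := hinv.apply_linearIsometryEquiv (reflection (𝕜 ∙ x)) hg x y
  rw [reflection_span_singleton_eq_neg (inner_eq_zero_symm.mp hgx),
    reflection_span_singleton_self, reflection_span_singleton_eq_neg hxy,
    hσ.map_neg_right (neg_ne_zero.mpr hg), ← neg_one_smul 𝕜 g,
    hinv.apply_unit_smul_base hσ (by simp) hg] at h
  exact neg_eq_self.mp h

theorem apply_self_eq_of_orthonormal {g x g' x' : H} (hg : ‖g‖ = 1) (hx : ‖x‖ = 1)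
    (hgx : ⟪g, x⟫_𝕜 = 0) (hg' : ‖g'‖ = 1) (hx' : ‖x'‖ = 1) (hgx' : ⟪g', x'⟫_𝕜 = 0) :
    σ g x x = σ g' x' x' := by
  have hg₀ := ne_zero_of_norm_eq_one hg
  have hg₀' := ne_zero_of_norm_eq_one hg'
  obtain ⟨c, R, hc, hR, -⟩ :=
    exists_linearIsometryEquiv_apply_eq_unit_smul (𝕜 := 𝕜) (hg'.trans hg.symm)
  set y := R.symm x
  have hy : ‖y‖ = 1 := by rw [LinearIsometryEquiv.norm_map, hx]
  have hgy : ⟪g', y⟫_𝕜 = 0 := by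
    rw [← R.inner_map_map, hR, R.apply_symm_apply, inner_smul_left, hgx, mul_zero]
  obtain ⟨d, S, hd, hS, hS_neg⟩ :=
    exists_linearIsometryEquiv_apply_eq_unit_smul (𝕜 := 𝕜) (hx'.trans hy.symm)
  have hSg : S g' = (-1 : 𝕜) • g' := by
    rw [neg_one_smul]
    exact hS_neg g' (inner_eq_zero_symm.mp hgx') (inner_eq_zero_symm.mp hgy)
  calc σ g x x = σ g (R y) (R y) := by rw [R.apply_symm_apply]
    _ = σ g' y y := hinv.apply_linearIsometryEquiv_of_apply_eq_unit_smul hσ R hg₀ hg₀' hc hR y y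
    _ = σ g' (d • y) (d • y) := by rw [hσ.map_smul_smul hg₀', hd]; simp
    _ = σ g' x' x' := by
      rw [← hS, hinv.apply_linearIsometryEquiv_of_apply_eq_unit_smul hσ S hg₀' hg₀' (by simp) hSg]

theorem exists_apply_self_self_eq : ∃ β : ℝ, ∀ g : H, ‖g‖ = 1 → σ g g g = β := by
  by_cases h : ∃ e : H, ‖e‖ = 1
  · obtain ⟨e, he⟩ := h
    refine ⟨RCLike.re (σ e e e), fun g hg => ?_⟩
    rw [hσ.ofReal_re_apply_self (ne_zero_of_norm_eq_one he), hinv.apply_self_self_eq hσ hg he]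
  · push Not at h
    exact ⟨0, fun g hg => absurd hg (h g)⟩

theorem exists_apply_self_eq_of_inner_eq_zero :
    ∃ α : ℝ, ∀ g x : H, ‖g‖ = 1 → ‖x‖ = 1 → ⟪g, x⟫_𝕜 = 0 → σ g x x = α := by
  by_cases h : ∃ e u : H, ‖e‖ = 1 ∧ ‖u‖ = 1 ∧ ⟪e, u⟫_𝕜 = 0
  · obtain ⟨e, u, he, hu, heu⟩ := h
    refine ⟨RCLike.re (σ e u u), fun g x hg hx hgx => ?_⟩
    rw [hσ.ofReal_re_apply_self (ne_zero_of_norm_eq_one he),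
      hinv.apply_self_eq_of_orthonormal hσ hg hx hgx he hu heu]
  · push Not at h
    exact ⟨0, fun g x hg hx hgx => absurd hgx (h g x hg hx)⟩

theorem apply_of_inner_eq_zero {g : H} (hg : ‖g‖ = 1) {α : ℝ}
    (hα : ∀ x : H, ‖x‖ = 1 → ⟪g, x⟫_𝕜 = 0 → σ g x x = α) {x : H} (hgx : ⟪g, x⟫_𝕜 = 0)
    (y : H) : σ g x y = α * ⟪y, x⟫_𝕜 := by
  have hg₀ := ne_zero_of_norm_eq_one hg
  rcases eq_or_ne x 0 with rfl | hx
  · rw [hσ.map_zero_left hg₀, inner_zero_right, mul_zero]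
  have hx' : (‖x‖ : 𝕜) ≠ 0 := by simpa using hx
  have hxx : σ g x x = α * (‖x‖ : 𝕜) ^ 2 := by
    have h := hα _ (norm_smul_inv_norm hx) (by rw [inner_smul_right, hgx, mul_zero])
    rw [hσ.map_smul_smul hg₀, norm_inv, RCLike.norm_ofReal, abs_norm] at h
    push_cast at h
    rw [← h]
    field_simp
  set p : 𝕜 := ⟪x, y⟫_𝕜 / (‖x‖ : 𝕜) ^ 2
  have hxy' : ⟪x, y - p • x⟫_𝕜 = 0 := by
    rw [inner_sub_right, inner_smul_right, inner_self_eq_norm_sq_to_K,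
      div_mul_cancel₀ _ (pow_ne_zero 2 hx'), sub_self]
  calc σ g x y = σ g x (p • x + (y - p • x)) := by rw [add_sub_cancel]
    _ = conj p * (α * (‖x‖ : 𝕜) ^ 2) := by
      rw [hσ.map_add_right hg₀, hσ.map_smul_right hg₀, hxx,
        hinv.apply_eq_zero_of_orthogonal hσ hg₀ hgx hxy', add_zero]
    _ = α * ⟪y, x⟫_𝕜 := by
      rw [← inner_conj_symm y x, map_div₀, map_pow, RCLike.conj_ofReal]
      field_simp

theorem apply_of_norm_eq_one {g : H} (hg : ‖g‖ = 1) {α β : ℝ} (hβ : σ g g g = β)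
    (hα : ∀ x : H, ‖x‖ = 1 → ⟪g, x⟫_𝕜 = 0 → σ g x x = α) (f h : H) :
    σ g f h = α * ⟪h, f⟫_𝕜 + (β - α : ℝ) * ⟪g, f⟫_𝕜 * ⟪h, g⟫_𝕜 := by
  have hg₀ := ne_zero_of_norm_eq_one hg
  have hgg : ⟪g, g⟫_𝕜 = 1 := by rw [inner_self_eq_norm_sq_to_K, hg]; simp
  have hperp (x : H) : ⟪g, x - ⟪g, x⟫_𝕜 • g⟫_𝕜 = 0 := by
    rw [inner_sub_right, inner_smul_right, hgg, mul_one, sub_self]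
  set p := ⟪g, f⟫_𝕜
  set q := ⟪g, h⟫_𝕜
  have hhg : ⟪h, g⟫_𝕜 = conj q := (inner_conj_symm h g).symm
  have hσ_fg : σ g (f - p • g) g = 0 := hinv.apply_self_right_eq_zero hσ hg₀ (hperp f)
  have hσ_gh : σ g g (h - q • g) = 0 := by
    rw [← hσ.conj_symm hg₀, hinv.apply_self_right_eq_zero hσ hg₀ (hperp h), map_zero]
  have hσ_perp : σ g (f - p • g) (h - q • g) = α * (⟪h, f⟫_𝕜 - p * conj q) := by
    rw [hinv.apply_of_inner_eq_zero hσ hg hα (hperp f)]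
    simp only [inner_sub_left, inner_sub_right, inner_smul_left, inner_smul_right, hgg, hhg]
    ring
  calc σ g f h = σ g (p • g + (f - p • g)) (q • g + (h - q • g)) := by
        rw [add_sub_cancel, add_sub_cancel]
    _ = _ := by
      simp only [hσ.map_add_left hg₀, hσ.map_add_right hg₀, hσ.map_smul_left hg₀,
        hσ.map_smul_right hg₀, hβ, hσ_fg, hσ_gh, hσ_perp, hhg]
      push_cast
      ring

theorem exists_eq_invariantField :
    ∃ a b : ℝ, ∀ g : H, g ≠ 0 → ∀ f h : H, σ g f h = invariantField 𝕜 a b g f h := by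
  obtain ⟨β, hβ⟩ := hinv.exists_apply_self_self_eq hσ
  obtain ⟨α, hα⟩ := hinv.exists_apply_self_eq_of_inner_eq_zero hσ
  refine ⟨α, β - α, fun g hg f h => ?_⟩
  have hg' : (‖g‖ : 𝕜) ≠ 0 := by simpa using hg
  set e := (‖g‖⁻¹ : 𝕜) • g
  have he : ‖e‖ = 1 := norm_smul_inv_norm hg
  have hge : g = (‖g‖ : 𝕜) • e := by rw [smul_inv_smul₀ hg']
  rw [hge, hinv.apply_smul_base hσ hg' (ne_zero_of_norm_eq_one he),
    hinv.apply_of_norm_eq_one hσ he (hβ e he) (hα e · he)]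
  simp only [invariantField, e, inner_smul_left, inner_smul_right, norm_smul, he,
    RCLike.norm_ofReal, abs_norm, map_inv₀, RCLike.conj_ofReal]
  push_cast
  field_simp

end IsCongruenceInvariant

end

/-- a sesquilinear field `σ` on `H \ {0}` is invariant with respect to
every congruence (nonzero scalar multiple of an isometry) iff there are `a, b ∈ ℝ`
such that `σ_g(f,h) = (a/‖g‖²)⟨f,h⟩ + (b/‖g‖⁴)⟨f,g⟩⟨g,h⟩` for every nonzero `g` and
all `f, h`. -/
theorem stmt10 {𝕜 H : Type*} [RCLike 𝕜] [NormedAddCommGroup H] [InnerProductSpace 𝕜 H]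
    (σ : H → H → H → 𝕜) (hσ : IsSesquiField 𝕜 {x : H | x ≠ 0} σ) :
    (∀ c : 𝕜, c ≠ 0 → ∀ T : H →ₗᵢ[𝕜] H, ∀ g : H, g ≠ 0 → ∀ f h : H,
        σ (c • T g) (c • T f) (c • T h) = σ g f h) ↔
      ∃ a b : ℝ, ∀ g : H, g ≠ 0 → ∀ f h : H,
        σ g f h = ((a / ‖g‖ ^ 2 : ℝ) : 𝕜) * (inner 𝕜 h f : 𝕜) +
          ((b / ‖g‖ ^ 4 : ℝ) : 𝕜) * (inner 𝕜 g f : 𝕜) * (inner 𝕜 h g : 𝕜) := by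
  refine ⟨fun hinv => IsCongruenceInvariant.exists_eq_invariantField hinv hσ, ?_⟩
  rintro ⟨a, b, hab⟩ c hc T g hg f h
  have hcTg : c • T g ≠ 0 := 
    smul_ne_zero hc ((map_ne_zero_iff T T.injective).mpr hg)
  rw [hab _ hcTg, hab g hg]
  exact isCongruenceInvariant_invariantField a b c hc T g hg f h
end

section
/- Let ρ be a non-symmetric Finsler metric on an isometry-invariant open set G ⊆ H with 0 ∉ G. Then ρ is isometry-invariant if and only if there exists a function λ : (0,∞) × 𝔽 × ℝ → ℝ, written λ_r(p,q), such that: (1) λ_r(t·p, t·q) = t·λ_r(p,q) and λ_r(t·p, −t·q) = t·λ_r(p,q) for all r > 0, p ∈ 𝔽, q ∈ ℝ, and real t ≥ 0; and (2) ρ_g(h) = λ_{‖g‖}(⟨h,g⟩, √(‖h‖²·‖g‖² − |⟨h,g⟩|²)) for every g ∈ G and h ∈ H. -/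
open scoped InnerProductSpace
open Function

theorem Function.FactorsThrough.extend_apply_eq_mul {α β : Type*} {f : α → β} {g : α → ℝ}
    (hg : FactorsThrough g f) (σ : ℝ → α → α) (S : ℝ → β → β)
    (hfσ : ∀ t a, 0 ≤ t → f (σ t a) = S t (f a)) (hgσ : ∀ t a, 0 ≤ t → g (σ t a) = t * g a)
    (hS_mul : ∀ s t x, S s (S t x) = S (s * t) x) (hS_one : ∀ x, S 1 x = x)
    {t : ℝ} (ht : 0 ≤ t) (x : β) : extend f g 0 (S t x) = t * extend f g 0 x := by
  by_cases hx : ∃ a, f a = x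
  · obtain ⟨a, rfl⟩ := hx
    rw [← hfσ t a ht, hg.extend_apply, hg.extend_apply, hgσ t a ht]
  rw [extend_apply' _ _ _ hx, Pi.zero_apply, mul_zero]
  by_cases hy : ∃ b, f b = S t x
  · obtain ⟨b, hb⟩ := hy
    -- `S t x` lies in the image only if `t = 0`, and `S 0` fixes the image pointwise.
    rcases ht.eq_or_lt with rfl | htpos
    · have hb0 : f (σ 0 b) = f b := by rw [hfσ 0 b le_rfl, hb, hS_mul, mul_zero]
      rw [← hb, hg.extend_apply, ← hg hb0, hgσ 0 b le_rfl, zero_mul]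
    · refine absurd ⟨σ t⁻¹ b, ?_⟩ hx
      rw [hfσ _ _ (inv_nonneg.2 ht), hb, hS_mul, inv_mul_cancel₀ htpos.ne', hS_one]
  · exact extend_apply' _ _ _ hy

section

variable {𝕜 E : Type*} [RCLike 𝕜] [NormedAddCommGroup E] [InnerProductSpace 𝕜 E]

theorem LinearMap.exists_linearIsometry_comp_rangeRestrict_eq {M : Type*} [AddCommGroup M]
    [Module 𝕜 M] (f f' : M →ₗ[𝕜] E) (h : ∀ x y, ⟪f x, f y⟫_𝕜 = ⟪f' x, f' y⟫_𝕜) :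
    ∃ L : range f →ₗᵢ[𝕜] E, ∀ x, L (f.rangeRestrict x) = f' x := by
  have hker : ker f ≤ ker f' := fun x hx => by
    rw [mem_ker, ← inner_self_eq_zero (𝕜 := 𝕜), ← h, mem_ker.1 hx, inner_zero_left]
  set L : range f →ₗ[𝕜] E := (ker f).liftQ f' hker ∘ₗ f.quotKerEquivRange.symm.toLinearMap
  have hL : ∀ x, L (f.rangeRestrict x) = f' x := fun x => by
    have : f.quotKerEquivRange.symm (f.rangeRestrict x) = (ker f).mkQ x :=
      (LinearEquiv.symm_apply_eq _).2 (Subtype.ext (f.quotKerEquivRange_apply_mk x).symm)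
    simp [L, this]
  refine ⟨L.isometryOfInner ?_, hL⟩
  rintro ⟨_, x, rfl⟩ ⟨_, y, rfl⟩
  exact (congr_arg₂ _ (hL x) (hL y)).trans (h x y).symm

theorem exists_linearIsometry_apply_eq_of_inner_eq_of_finiteDimensional [FiniteDimensional 𝕜 E]
    {ι : Type*} [Finite ι] (v v' : ι → E) (hv : ∀ i j, ⟪v i, v j⟫_𝕜 = ⟪v' i, v' j⟫_𝕜) :
    ∃ U : E →ₗᵢ[𝕜] E, ∀ i, U (v i) = v' i := by
  classical
  have := Fintype.ofFinite ι
  set f := Fintype.linearCombination 𝕜 v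
  set f' := Fintype.linearCombination 𝕜 v'
  obtain ⟨L, hL⟩ := f.exists_linearIsometry_comp_rangeRestrict_eq f' fun x y => by
    simp [f, f', Fintype.linearCombination_apply, sum_inner, inner_sum, inner_smul_left,
      inner_smul_right, hv]
  refine ⟨L.extend, fun i => ?_⟩
  have hf : f (Pi.single i 1) = v i := by simp [f, Fintype.linearCombination_apply_single]
  have hf' : f' (Pi.single i 1) = v' i := by simp [f', Fintype.linearCombination_apply_single]
  rw [← hf, ← hf', ← hL]
  exact L.extend_apply (f.rangeRestrict _)

theorem Submodule.exists_linearIsometry_extend (W : Submodule 𝕜 E) [W.HasOrthogonalProjection]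
    (U : W →ₗᵢ[𝕜] W) : ∃ T : E →ₗᵢ[𝕜] E, ∀ w : W, T w = U w := by
  set T : E →ₗ[𝕜] E := W.subtype ∘ₗ U.toLinearMap ∘ₗ W.orthogonalProjectionOnto.toLinearMap
    + Wᗮ.starProjection.toLinearMap
  have hT : ∀ x, ‖T x‖ = ‖x‖ := fun x => by
    have horth : ⟪(U (W.orthogonalProjectionOnto x) : E), Wᗮ.starProjection x⟫_𝕜 = 0 :=
      Submodule.inner_right_of_mem_orthogonal (U _).2 (Wᗮ.starProjection_apply_mem x)
    refine (sq_eq_sq₀ (norm_nonneg _) (norm_nonneg _)).1 ?_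
    calc ‖T x‖ ^ 2 = ‖(U (W.orthogonalProjectionOnto x) : E)‖ ^ 2 + ‖Wᗮ.starProjection x‖ ^ 2 := by
          simp only [sq]; exact norm_add_sq_eq_norm_sq_add_norm_sq_of_inner_eq_zero _ _ horth
      _ = ‖W.starProjection x‖ ^ 2 + ‖Wᗮ.starProjection x‖ ^ 2 := by
          rw [Submodule.norm_coe, U.norm_map]; rfl
      _ = ‖x‖ ^ 2 := (norm_sq_eq_add_norm_sq_starProjection x W).symm
  refine ⟨⟨T, hT⟩, fun w => ?_⟩
  simp [T]

theorem exists_linearIsometry_apply_eq_of_inner_eq_s15 {ι : Type*} [Finite ι] (v v' : ι → E)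
    (hv : ∀ i j, ⟪v i, v j⟫_𝕜 = ⟪v' i, v' j⟫_𝕜) :
    ∃ T : E →ₗᵢ[𝕜] E, ∀ i, T (v i) = v' i := by
  set W := Submodule.span 𝕜 (Set.range v ∪ Set.range v')
  have : FiniteDimensional 𝕜 W :=
    FiniteDimensional.span_of_finite 𝕜 ((Set.finite_range v).union (Set.finite_range v'))
  obtain ⟨U, hU⟩ := exists_linearIsometry_apply_eq_of_inner_eq_of_finiteDimensional
    (fun i => (⟨v i, Submodule.subset_span (Or.inl ⟨i, rfl⟩)⟩ : W))
    (fun i => ⟨v' i, Submodule.subset_span (Or.inr ⟨i, rfl⟩)⟩) hv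
  obtain ⟨T, hT⟩ := W.exists_linearIsometry_extend U
  exact ⟨T, fun i => (hT _).trans (congr_arg Subtype.val (hU i))⟩

theorem exists_linearIsometry_apply_eq_pair {x y x' y' : E} (hx : ‖x‖ = ‖x'‖) (hy : ‖y‖ = ‖y'‖)
    (hxy : ⟪x, y⟫_𝕜 = ⟪x', y'⟫_𝕜) : ∃ T : E →ₗᵢ[𝕜] E, T x = x' ∧ T y = y' := by
  have hyx : ⟪y, x⟫_𝕜 = ⟪y', x'⟫_𝕜 := by rw [← inner_conj_symm, hxy, inner_conj_symm]
  obtain ⟨T, hT⟩ := exists_linearIsometry_apply_eq_of_inner_eq_s15 (𝕜 := 𝕜) ![x, y] ![x', y'] <| by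
    simp [Fin.forall_fin_two, inner_self_eq_norm_sq_to_K, hx, hy, hxy, hyx]
  exact ⟨T, hT 0, hT 1⟩

variable (𝕜) in
noncomputable def gramData (g h : E) : ℝ × 𝕜 × ℝ :=
  (‖g‖, ⟪g, h⟫_𝕜, √(‖h‖ ^ 2 * ‖g‖ ^ 2 - ‖⟪g, h⟫_𝕜‖ ^ 2))

theorem norm_eq_of_gramData_eq {g h g' h' : E} (hg : g ≠ 0)
    (heq : gramData 𝕜 g h = gramData 𝕜 g' h') : ‖h‖ = ‖h'‖ := by
  have radicand_nonneg : ∀ a b : E, 0 ≤ ‖b‖ ^ 2 * ‖a‖ ^ 2 - ‖⟪a, b⟫_𝕜‖ ^ 2 := fun a b => by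
    rw [sub_nonneg, ← mul_pow, mul_comm]
    exact pow_le_pow_left₀ (norm_nonneg _) (norm_inner_le_norm a b) 2
  simp only [gramData, Prod.mk.injEq] at heq
  obtain ⟨hg', hinner, hsqrt⟩ := heq
  rw [Real.sqrt_inj (radicand_nonneg g h) (radicand_nonneg g' h'), ← hg', ← hinner,
    sub_left_inj] at hsqrt
  have hsq := mul_right_cancel₀ (pow_ne_zero 2 (norm_ne_zero_iff.2 hg)) hsqrt
  exact (sq_eq_sq₀ (norm_nonneg _) (norm_nonneg _)).1 hsq

theorem gramData_smul_right (g h : E) {t : ℝ} (ht : 0 ≤ t) :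
    gramData 𝕜 g ((t : 𝕜) • h) =
      (‖g‖, (t : 𝕜) * ⟪g, h⟫_𝕜, t * √(‖h‖ ^ 2 * ‖g‖ ^ 2 - ‖⟪g, h⟫_𝕜‖ ^ 2)) := by
  have hrad : ‖(t : 𝕜) • h‖ ^ 2 * ‖g‖ ^ 2 - ‖(t : 𝕜) * ⟪g, h⟫_𝕜‖ ^ 2
      = t ^ 2 * (‖h‖ ^ 2 * ‖g‖ ^ 2 - ‖⟪g, h⟫_𝕜‖ ^ 2) := by
    rw [norm_smul, norm_mul, RCLike.norm_ofReal, abs_of_nonneg ht]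
    ring
  rw [gramData, inner_smul_right, hrad, Real.sqrt_mul (sq_nonneg t), Real.sqrt_sq ht]

theorem factorsThrough_gramData {G : Set E} (h0G : (0 : E) ∉ G) {ρ : E → E → ℝ}
    (hρ : ∀ T : E →ₗᵢ[𝕜] E, ∀ g ∈ G, ∀ h, ρ (T g) (T h) = ρ g h) :
    FactorsThrough (fun x : G × E => ρ x.1 x.2) (fun x : G × E => gramData 𝕜 (x.1 : E) x.2) := by
  rintro ⟨⟨g, hg⟩, h⟩ ⟨⟨g', hg'⟩, h'⟩ heq
  have hh := norm_eq_of_gramData_eq (ne_of_mem_of_not_mem hg h0G) heq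
  simp only [gramData, Prod.mk.injEq] at heq
  obtain ⟨T, rfl, rfl⟩ := exists_linearIsometry_apply_eq_pair heq.1 hh heq.2.1
  exact (hρ T g hg h).symm

theorem IsInvariantOpen.mem_of_norm_eq_s15 {G : Set E} (hG : IsInvariantOpen G) {x y : E} (hx : x ∈ G)
    (hxy : ‖y‖ = ‖x‖) : y ∈ G := by
  obtain ⟨R, -, rfl⟩ := hG
  exact (congr_arg (· ∈ R) hxy).mpr hx

end

/-- a non-symmetric Finsler metric `ρ` on an isometry-invariant open set
`G` with `0 ∉ G` is isometry-invariant iff there is `λ : (0,∞) × 𝔽 × ℝ → ℝ` with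
`λ_r(tp, ±tq) = t λ_r(p,q)` for `t ≥ 0`, and
`ρ_g(h) = λ_{‖g‖}(⟨h,g⟩, √(‖h‖²‖g‖² − |⟨h,g⟩|²))`.  (The paper's inner product
`⟨h,g⟩`, linear in `h`, is Mathlib's `inner g h`.) -/
theorem stmt15 {𝕜 H : Type*} [RCLike 𝕜] [NormedAddCommGroup H] [InnerProductSpace 𝕜 H]
    (G : Set H) (hG : IsInvariantOpen G) (h0G : (0 : H) ∉ G)
    (ρ : H → H → ℝ)
    (hFinsler : ∀ g ∈ G, ∀ h : H, ∀ r : ℝ, 0 ≤ r → ρ g ((r : 𝕜) • h) = r * ρ g h) :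
    (∀ T : H →ₗᵢ[𝕜] H, ∀ g ∈ G, ∀ h : H, ρ (T g) (T h) = ρ g h) ↔
      ∃ lam : ℝ → 𝕜 → ℝ → ℝ,
        (∀ r > (0 : ℝ), ∀ (p : 𝕜) (q : ℝ), ∀ t : ℝ, 0 ≤ t →
          lam r ((t : 𝕜) * p) (t * q) = t * lam r p q ∧
          lam r ((t : 𝕜) * p) (-(t * q)) = t * lam r p q) ∧
        (∀ g ∈ G, ∀ h : H,
          ρ g h = lam ‖g‖ (inner 𝕜 g h : 𝕜)
            (Real.sqrt (‖h‖ ^ 2 * ‖g‖ ^ 2 - ‖(inner 𝕜 g h : 𝕜)‖ ^ 2))) := by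
  constructor
  · intro hρ
    set F : G × H → ℝ × 𝕜 × ℝ := fun x => gramData 𝕜 (x.1 : H) x.2
    set P : G × H → ℝ := fun x => ρ x.1 x.2
    have hPF : FactorsThrough P F := factorsThrough_gramData h0G hρ
    have hΛ {t : ℝ} (ht : 0 ≤ t) := hPF.extend_apply_eq_mul (fun t x => (x.1, (t : 𝕜) • x.2))
      (fun t x => (x.1, (t : 𝕜) * x.2.1, t * x.2.2))
      (fun t x ht => gramData_smul_right _ _ ht) (fun t x ht => hFinsler _ x.1.2 _ t ht)
      (fun s t x => by simp [mul_assoc]) (fun x => by simp) ht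
    refine ⟨fun r p q => extend F P 0 (r, p, |q|), fun r _ p q t ht => ?_, fun g hg h => ?_⟩
    · beta_reduce
      rw [abs_neg, abs_mul, abs_of_nonneg ht]
      exact ⟨hΛ ht (r, p, |q|), hΛ ht (r, p, |q|)⟩
    · beta_reduce
      rw [abs_of_nonneg (Real.sqrt_nonneg _)]
      exact (hPF.extend_apply 0 (⟨g, hg⟩, h)).symm
  · rintro ⟨lam, -, hlam⟩ T g hg h
    rw [hlam g hg, hlam _ (hG.mem_of_norm_eq_s15 hg (T.norm_map g)), T.norm_map, T.inner_map_map,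
      T.norm_map]
end

section
/- Let N be a seminorm on ℝ² satisfying N(−p, q) = N(p, q) for all p, q ∈ ℝ. Then at least one of the following holds: (1) N is a norm (N(p,q) = 0 implies (p,q) = (0,0)); (2) there exists a ≥ 0 such that N(p,q) = a·|p| for all p, q ∈ ℝ; (3) there exists b ≥ 0 such that N(p,q) = b·|q| for all p, q ∈ ℝ. -/
/-!
The null set `{x | N x = 0}` of a seminorm is a subspace, and adding one of its vectors does not
change `N`. By the symmetry it is invariant under `(p, q) ↦ (p, -q)`, so a null vector `(p, q)`
with `p ≠ 0` yields the null vector `(p, q) + (p, -q) = (2p, 0)`; otherwise the null space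
contains `(0, q)` with `q ≠ 0`. Either way a coordinate axis is null and `N` only sees the other
coordinate.
-/

namespace Seminorm

section

variable {𝕜 E : Type*} [NormedField 𝕜] [AddCommGroup E] [Module 𝕜 E]

theorem map_add_eq_left_of_map_eq_zero (N : Seminorm 𝕜 E) {x y : E} (hy : N y = 0) :
    N (x + y) = N x := by
  refine le_antisymm ?_ ?_
  · simpa [hy] using map_add_le_add N x y
  · simpa [hy] using map_sub_le_add N (x + y) y

theorem map_smul_add_smul_of_map_eq_zero (N : Seminorm 𝕜 E) {u : E} (hu : N u = 0)
    (w : E) (a b : 𝕜) : N (a • u + b • w) = ‖b‖ * N w := by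
  rw [add_comm, map_add_eq_left_of_map_eq_zero N (by rw [map_smul_eq_mul, hu, mul_zero]),
    map_smul_eq_mul]

end

theorem map_fst_eq_zero_of_map_eq_zero {E F : Type*} [AddCommGroup E] [Module ℝ E]
    [AddCommGroup F] [Module ℝ F] (N : Seminorm ℝ (E × F))
    (hsym : ∀ x y, N (-x, y) = N (x, y)) {x : E} {y : F} (h : N (x, y) = 0) : N (x, 0) = 0 := by
  have h' : N (x, -y) = 0 := by rw [← map_neg_eq_map, Prod.neg_mk, neg_neg, hsym, h]
  have hsum : (2 : ℝ) • ((x, 0) : E × F) = (x, y) + (x, -y) := by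
    ext <;> simp [two_smul]
  have : 2 * N (x, 0) ≤ 0 := by
    have := map_add_le_add N (x, y) (x, -y)
    rwa [← hsum, map_smul_eq_mul, h, h', add_zero, Real.norm_two] at this
  exact le_antisymm (by linarith) (apply_nonneg N _)

end Seminorm

/-- Remark `dg`: if `N` is a seminorm on `ℝ²` with `N(−p,q) = N(p,q)`,
then `N` is a norm, or `N(p,q) = a|p|` for some `a ≥ 0`, or `N(p,q) = b|q|` for some
`b ≥ 0`. -/
theorem stmt19 (N : Seminorm ℝ (ℝ × ℝ))
    (hsym : ∀ p q : ℝ, N (-p, q) = N (p, q)) :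
    (∀ p q : ℝ, N (p, q) = 0 → p = 0 ∧ q = 0) ∨
      (∃ a : ℝ, 0 ≤ a ∧ ∀ p q : ℝ, N (p, q) = a * |p|) ∨
      (∃ b : ℝ, 0 ≤ b ∧ ∀ p q : ℝ, N (p, q) = b * |q|) := by
  by_cases hnorm : ∀ p q : ℝ, N (p, q) = 0 → p = 0 ∧ q = 0
  · exact Or.inl hnorm
  push Not at hnorm
  obtain ⟨p, q, hpq, hne⟩ := hnorm
  by_cases hp : p = 0
  · subst hp
    have hq : q ≠ 0 := hne rfl
    refine Or.inr (Or.inl ⟨N (1, 0), apply_nonneg N _, fun x y => ?_⟩)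
    have hxy : ((x, y) : ℝ × ℝ) = (y / q) • ((0, q) : ℝ × ℝ) + x • (1, 0) := by
      ext <;> simp [div_mul_cancel₀ _ hq]
    rw [hxy, N.map_smul_add_smul_of_map_eq_zero hpq, Real.norm_eq_abs, mul_comm]
  · have hp0 := N.map_fst_eq_zero_of_map_eq_zero hsym hpq
    refine Or.inr (Or.inr ⟨N (0, 1), apply_nonneg N _, fun x y => ?_⟩)
    have hxy : ((x, y) : ℝ × ℝ) = (x / p) • ((p, 0) : ℝ × ℝ) + y • (0, 1) := by
      ext <;> simp [div_mul_cancel₀ _ hp]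
    rw [hxy, N.map_smul_add_smul_of_map_eq_zero hp0, Real.norm_eq_abs, mul_comm]
end
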